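/- arXiv:1009.1637 — 7 statements merged into one kernel-verified Lean document; each statement's English description precedes it below -/
import Mathlib

section
/- Let ζ lie on the unit circle with Σ_{j=0}^∞ |φ_j(ζ)|² = ∞ (ζ is not a pure point of the measure), and suppose ζⁿ·α_n → L for some L ∈ ℂ. Then ζⁿ·Δ_n(ζ) → −2L, and consequently ζⁿ·(α_n + Δ_n(ζ)) → −L; that is, the rotated perturbed Verblunsky coefficients converge to the negative of the limit of the rotated original ones. -/
/-!
On `‖ζ‖ = 1` one has `φ*_n = ζⁿ conj φ_n`, so `z_n = ζ^(n-1) φ*_n / φ_n` is unimodular and the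
Szegő recursion becomes the Möbius recursion `z_{n+1} = (z_n - β_n) / (1 - conj β_n z_n)` with
`β_n = ζⁿ αₙ`, together with `|φ_{n+1}|² (1 - |β_n|²) = |φ_n|² |z_n - β_n|²`. In these terms
`ζⁿ Δ_n = (z_n - β_n) |φ_n|² / (c + K_n)` with `c = (1 - γ) / γ`, and `y_n = (c + K_n) / |φ_n|²`
satisfies `y_{n+1} = q_n y_n + 1` with `q_n = |φ_n|² / |φ_{n+1}|² = (1 - |β_n|²) / |z_n - β_n|²`.

If `L = 0` then `q_n → 1`, so `y_n → ∞` while `z_n - β_n` stays bounded. If `L = ℓ u ≠ 0`, the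
limiting Möbius map has the attracting fixed point `-u` and the repelling one `u`. With `u_n` the
phase of `β_n` and `h_n = Re (conj u_n z_n) = cos θ_n`, each step multiplies `cot² (θ_n / 2)` by
`((1 - |β_n|) / (1 + |β_n|))²`, up to an error controlled by `|u_{n+1} - u_n| → 0`. So either
`h_n ≤ 0` at some late time, after which `z_n → -u`, or `z_n` stays close to `u` forever, and then
`|φ_n|²` decays geometrically, contradicting `Σ |φ_n|² = ∞`. Finally `q_n → (1 - ℓ) / (1 + ℓ)`,
hence `1 / y_n → 2ℓ / (1 + ℓ)` and `ζⁿ Δ_n → (-u - L) · 2ℓ / (1 + ℓ) = -2L`.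
-/

open Filter Finset

/-- The orthonormal Szegő polynomials `(φ_n(ζ), φ*_n(ζ))` defined by the Szegő recursion. -/
noncomputable def szegoPhi (α : ℕ → ℂ) (ζ : ℂ) : ℕ → ℂ × ℂ
  | 0 => (1, 1)
  | n + 1 =>
      (((Real.sqrt (1 - ‖α n‖ ^ 2) : ℝ) : ℂ))⁻¹ •
        (ζ * (szegoPhi α ζ n).1 - (starRingEnd ℂ) (α n) * (szegoPhi α ζ n).2,
         (szegoPhi α ζ n).2 - α n * ζ * (szegoPhi α ζ n).1)

/-- The CD kernel diagonal `K_n(ζ,ζ) = Σ_{j=0}^n |φ_j(ζ)|²`. -/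
noncomputable def szegoK (α : ℕ → ℂ) (ζ : ℂ) (n : ℕ) : ℝ :=
  ∑ j ∈ Finset.range (n + 1), ‖(szegoPhi α ζ j).1‖ ^ 2

/-- The perturbation `Δ_n(ζ) = ρ_n conj(φ_{n+1}(ζ)) φ*_n(ζ) / ((1-γ)γ⁻¹ + K_n(ζ,ζ))` of the
`n`-th Verblunsky coefficient upon insertion of a pure point of weight `γ` at `ζ`. -/
noncomputable def szegoDelta (α : ℕ → ℂ) (ζ : ℂ) (γ : ℝ) (n : ℕ) : ℂ :=
  ((Real.sqrt (1 - ‖α n‖ ^ 2) : ℝ) : ℂ) *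
    (starRingEnd ℂ) ((szegoPhi α ζ (n + 1)).1) * (szegoPhi α ζ n).2 /
    ((((1 - γ) * γ⁻¹ + szegoK α ζ n : ℝ)) : ℂ)

open Topology

theorem tendsto_zero_of_le_mul_add {e δ : ℕ → ℝ} {q : ℝ} (hq0 : 0 ≤ q) (hq1 : q < 1)
    (he : ∀ n, 0 ≤ e n) (hrec : ∀ᶠ n in atTop, e (n + 1) ≤ q * e n + δ n)
    (hδ : Tendsto δ atTop (𝓝 0)) : Tendsto e atTop (𝓝 0) := by
  refine tendsto_order.2 ⟨fun a ha => .of_forall fun n => ha.trans_le (he n), fun ε hε => ?_⟩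
  have hδε : ∀ᶠ n in atTop, δ n ≤ (1 - q) * (ε / 2) :=
    hδ.eventually (ge_mem_nhds (by nlinarith))
  obtain ⟨N, hN⟩ := eventually_atTop.1 (hrec.and hδε)
  -- above the level `ε / 2` the excess decays geometrically
  have hgeom (k : ℕ) : max (e (N + k) - ε / 2) 0 ≤ q ^ k * max (e N - ε / 2) 0 :=
    le_geom (u := fun k => max (e (N + k) - ε / 2) 0) hq0 k fun j _ => by
      obtain ⟨hr, hδj⟩ := hN (N + j) (by omega)
      rw [← add_assoc, mul_max_of_nonneg _ _ hq0, mul_zero]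
      exact max_le_max (by nlinarith) le_rfl
  obtain ⟨K, hK⟩ := eventually_atTop.1 <|
    ((tendsto_pow_atTop_nhds_zero_of_lt_one hq0 hq1).mul_const (max (e N - ε / 2) 0)).eventually
      (gt_mem_nhds (by linarith : (0 : ℝ) * max (e N - ε / 2) 0 < ε / 2))
  filter_upwards [eventually_ge_atTop (N + K)] with n hn
  obtain ⟨k, rfl⟩ := Nat.exists_eq_add_of_le (le_of_add_le_left hn)
  linarith [(le_max_left _ _).trans_lt ((hgeom k).trans_lt (hK k (by omega)))]

theorem tendsto_zero_of_le_mul_succ_add {e δ : ℕ → ℝ} {q B : ℝ} (hq0 : 0 ≤ q) (hq1 : q < 1)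
    (he : ∀ n, 0 ≤ e n ∧ e n ≤ B) (hrec : ∀ᶠ n in atTop, e n ≤ q * e (n + 1) + δ n)
    (hδ : Tendsto δ atTop (𝓝 0)) : Tendsto e atTop (𝓝 0) := by
  refine tendsto_order.2 ⟨fun a ha => .of_forall fun n => ha.trans_le (he n).1, fun ε hε => ?_⟩
  have hδε : ∀ᶠ n in atTop, δ n ≤ (1 - q) * (ε / 2) :=
    hδ.eventually (ge_mem_nhds (by nlinarith))
  obtain ⟨N, hN⟩ := eventually_atTop.1 (hrec.and hδε)
  have hB : 0 ≤ B := (he 0).1.trans (he 0).2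
  have hgeom (k : ℕ) : ∀ n ≥ N, max (e n - ε / 2) 0 ≤ q ^ k * B := by
    induction k with
    | zero =>
      intro n _
      rw [pow_zero, one_mul]
      exact max_le (by linarith [(he n).2]) hB
    | succ k ih =>
      intro n hn
      obtain ⟨hr, hδn⟩ := hN n hn
      have := ih (n + 1) (by omega)
      rw [pow_succ, mul_comm (q ^ k) q, mul_assoc]
      refine max_le ?_ (by positivity)
      nlinarith [le_max_left (e (n + 1) - ε / 2) 0]
  obtain ⟨K, hK⟩ := eventually_atTop.1 <|
    ((tendsto_pow_atTop_nhds_zero_of_lt_one hq0 hq1).mul_const B).eventually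
      (gt_mem_nhds (by linarith : (0 : ℝ) * B < ε / 2))
  filter_upwards [eventually_ge_atTop N] with n hn
  linarith [(le_max_left _ _).trans_lt ((hgeom K n hn).trans_lt (hK K le_rfl))]

theorem tendsto_of_affine_rec {y q : ℕ → ℝ} {Q : ℝ} (hQ : Q < 1) (hq0 : ∀ n, 0 ≤ q n)
    (hy : ∀ n, y (n + 1) = q n * y n + 1) (hq : Tendsto q atTop (𝓝 Q)) :
    Tendsto y atTop (𝓝 (1 - Q)⁻¹) := by
  have hQ0 : 0 ≤ Q := ge_of_tendsto hq (.of_forall hq0)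
  set Y := (1 - Q)⁻¹
  have hY : 0 ≤ Y := inv_nonneg.2 (by linarith)
  have hYQ : Q * Y + 1 = Y := by
    linarith [mul_inv_cancel₀ (by linarith : 1 - Q ≠ 0)]
  have hrec : ∀ᶠ n in atTop, |y (n + 1) - Y| ≤ (1 + Q) / 2 * |y n - Y| + |q n - Q| * Y := by
    filter_upwards [hq.eventually (ge_mem_nhds (by linarith : Q < (1 + Q) / 2))] with n hn
    have : y (n + 1) - Y = q n * (y n - Y) + (q n - Q) * Y := by rw [hy]; linear_combination hYQ
    rw [this]
    calc _ ≤ |q n * (y n - Y)| + |(q n - Q) * Y| := abs_add_le _ _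
      _ ≤ (1 + Q) / 2 * |y n - Y| + |q n - Q| * Y := by
        rw [abs_mul, abs_mul, abs_of_nonneg (hq0 n), abs_of_nonneg hY]
        gcongr
  have hδ : Tendsto (fun n => |q n - Q| * Y) atTop (𝓝 0) := by
    simpa using ((hq.sub_const Q).abs).mul_const Y
  rw [tendsto_iff_dist_tendsto_zero]
  exact tendsto_zero_of_le_mul_add (by positivity) (by linarith) (fun n => abs_nonneg _) hrec hδ

theorem tendsto_atTop_of_affine_rec {y q : ℕ → ℝ} (hy0 : ∀ n, 0 ≤ y n)
    (hy : ∀ n, y (n + 1) = q n * y n + 1) (hq : Tendsto q atTop (𝓝 1)) :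
    Tendsto y atTop atTop := by
  refine tendsto_atTop.2 fun M => ?_
  -- eventually `q n ≥ Q`, and `|M| + 2` is the fixed point of `t ↦ Q * t + 1`
  set Q := 1 - 1 / (|M| + 2)
  have hQ1 : Q < 1 := sub_lt_self 1 (by positivity)
  have hQ0 : 0 ≤ Q := by
    simp only [Q]; rw [sub_nonneg, div_le_one (by positivity)]; linarith [abs_nonneg M]
  have hYQ : Q * (|M| + 2) + 1 = |M| + 2 := by
    simp only [Q]; field_simp; ring
  have hrec : ∀ᶠ n in atTop, max (|M| + 2 - y (n + 1)) 0 ≤ Q * max (|M| + 2 - y n) 0 + 0 := by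
    filter_upwards [hq.eventually (le_mem_nhds hQ1)] with n hn
    rw [add_zero, mul_max_of_nonneg _ _ hQ0, mul_zero, hy]
    exact max_le_max (by nlinarith [hy0 n]) le_rfl
  have := tendsto_zero_of_le_mul_add (e := fun n => max (|M| + 2 - y n) 0) hQ0 hQ1
    (fun n => le_max_right _ _) hrec tendsto_const_nhds
  filter_upwards [this.eventually (gt_mem_nhds one_pos)] with n hn
  linarith [le_max_left (|M| + 2 - y n) 0, le_abs_self M]

theorem tendsto_inv_of_affine_rec {y q : ℕ → ℝ} {Q : ℝ} (hQ : Q ≤ 1) (hy0 : ∀ n, 0 < y n)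
    (hq0 : ∀ n, 0 ≤ q n) (hy : ∀ n, y (n + 1) = q n * y n + 1) (hq : Tendsto q atTop (𝓝 Q)) :
    Tendsto (fun n => (y n)⁻¹) atTop (𝓝 (1 - Q)) := by
  rcases hQ.lt_or_eq with hQ | rfl
  · simpa using (tendsto_of_affine_rec hQ hq0 hy hq).inv₀ (inv_ne_zero (by linarith))
  · rw [sub_self]
    exact (tendsto_atTop_of_affine_rec (fun n => (hy0 n).le) hy hq).inv_tendsto_atTop

theorem tendsto_div_add_sum_of_tendsto_ratio {a : ℕ → ℝ} {c Q : ℝ} (hc : 0 ≤ c)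
    (ha : ∀ n, 0 < a n) (hQ : Q ≤ 1) (hq : Tendsto (fun n => a n / a (n + 1)) atTop (𝓝 Q)) :
    Tendsto (fun n => a n / (c + ∑ j ∈ range (n + 1), a j)) atTop (𝓝 (1 - Q)) := by
  have hS n : 0 < c + ∑ j ∈ range (n + 1), a j :=
    add_pos_of_nonneg_of_pos hc (sum_pos (fun j _ => ha j) nonempty_range_add_one)
  refine (tendsto_inv_of_affine_rec (y := fun n => (c + ∑ j ∈ range (n + 1), a j) / a n) hQ
    (fun n => div_pos (hS n) (ha n)) (fun n => (div_pos (ha n) (ha (n + 1))).le) (fun n => ?_)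
    hq).congr fun n => inv_div _ _
  rw [sum_range_succ]
  field_simp [(ha n).ne', (ha (n + 1)).ne']
  ring

/-- `mobiusCos b (cos θ)` is the real part of `(w - b) / (1 - b * w)` for `w = exp (θ * I)`. -/
noncomputable def mobiusCos (b h : ℝ) : ℝ := ((1 + b ^ 2) * h - 2 * b) / (1 + b ^ 2 - 2 * b * h)

section MobiusCos

variable {b h : ℝ}

lemma mobiusCos_denom_pos (hb0 : 0 ≤ b) (hb1 : b < 1) (hh : h ≤ 1) :
    0 < 1 + b ^ 2 - 2 * b * h := by
  nlinarith

lemma one_sub_mobiusCos_mul (hD : 1 + b ^ 2 - 2 * b * h ≠ 0) :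
    (1 - mobiusCos b h) * (1 + b ^ 2 - 2 * b * h) = (1 - h) * (1 + b) ^ 2 := by
  rw [mobiusCos, sub_mul, div_mul_cancel₀ _ hD]; ring

lemma one_add_mobiusCos_mul (hD : 1 + b ^ 2 - 2 * b * h ≠ 0) :
    (1 + mobiusCos b h) * (1 + b ^ 2 - 2 * b * h) = (1 + h) * (1 - b) ^ 2 := by
  rw [mobiusCos, add_mul, div_mul_cancel₀ _ hD]; ring

end MobiusCos

lemma one_add_div_one_sub_le {x y d : ℝ} (hx : x ≤ 1 / 4) (hy : y ≤ 0) (hxy : x - y ≤ d)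
    (hd : 0 ≤ d) : (1 + x) / (1 - x) ≤ (1 + y) / (1 - y) + 3 * d := by
  have hx' : 0 < 1 - x := by linarith
  have hy' : 0 < 1 - y := by linarith
  rw [div_add' _ _ _ hy'.ne', div_le_div_iff₀ hx' hy']
  have hP : 3 / 4 ≤ (1 - x) * (1 - y) := by nlinarith
  nlinarith [mul_le_mul_of_nonneg_left hP hd]

lemma mobiusCos_step_of_nonpos {b h₁ h₂ d κ : ℝ} (hb0 : 0 ≤ b) (hb1 : b < 1)
    (hκ : (1 - b) / (1 + b) ≤ κ) (hh₁ : -1 ≤ h₁) (hh₁0 : h₁ ≤ 0) (hstep : |h₂ - mobiusCos b h₁| ≤ d)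
    (hd : d ≤ (1 - κ ^ 2) / 16) :
    h₂ ≤ 0 ∧ (1 + h₂) / (1 - h₂) ≤ κ ^ 2 * ((1 + h₁) / (1 - h₁)) + 3 * d := by
  have hD := mobiusCos_denom_pos hb0 hb1 (hh₁0.trans zero_le_one)
  have hsub := one_sub_mobiusCos_mul hD.ne'
  have hadd := one_add_mobiusCos_mul hD.ne'
  set T := mobiusCos b h₁
  have hT0 : T ≤ 0 := by nlinarith
  have hYT : (1 + T) / (1 - T) = ((1 - b) / (1 + b)) ^ 2 * ((1 + h₁) / (1 - h₁)) := by
    rw [div_pow, div_mul_div_comm,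
      div_eq_div_iff (by linarith) (mul_pos (by positivity) (by linarith)).ne']
    linear_combination (1 - T) * hadd - (1 + T) * hsub
  have hd0 : 0 ≤ d := (abs_nonneg _).trans hstep
  have hbκ : ((1 - b) / (1 + b)) ^ 2 ≤ κ ^ 2 :=
    pow_le_pow_left₀ (div_nonneg (by linarith) (by linarith)) hκ 2
  have hY₁ : 0 ≤ (1 + h₁) / (1 - h₁) ∧ (1 + h₁) / (1 - h₁) ≤ 1 :=
    ⟨div_nonneg (by linarith) (by linarith), (div_le_one (by linarith)).2 (by linarith)⟩
  have hh₂ := (abs_le.1 hstep).2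
  have hY₂ : (1 + h₂) / (1 - h₂) ≤ κ ^ 2 * ((1 + h₁) / (1 - h₁)) + 3 * d := by
    have := one_add_div_one_sub_le (x := h₂) (by nlinarith) hT0 (by linarith) hd0
    rw [hYT] at this
    nlinarith
  refine ⟨?_, hY₂⟩
  have : (1 + h₂) / (1 - h₂) ≤ 1 := by nlinarith
  rw [div_le_one (by nlinarith)] at this
  linarith

lemma mobiusCos_step_of_pos {b h₁ h₂ d : ℝ} (hb0 : 0 ≤ b) (hb1 : b < 1) (hh₁ : -1 < h₁)
    (hh₁1 : h₁ ≤ 1) (hh₂ : 0 ≤ h₂) (hstep : |h₂ - mobiusCos b h₁| ≤ d) (hd : d ≤ 1 / 4) :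
    ((1 + b) / (1 - b)) ^ 2 * ((1 - h₁) / (1 + h₁)) ≤ (1 - h₂) / (1 + h₂) + 3 * d := by
  have hD := mobiusCos_denom_pos hb0 hb1 hh₁1
  have hsub := one_sub_mobiusCos_mul hD.ne'
  have hadd := one_add_mobiusCos_mul hD.ne'
  set T := mobiusCos b h₁
  have hT : 0 < 1 + T := by
    have : 0 < (1 + h₁) * (1 - b) ^ 2 := mul_pos (by linarith) (by nlinarith)
    nlinarith
  have hXT : (1 - T) / (1 + T) = ((1 + b) / (1 - b)) ^ 2 * ((1 - h₁) / (1 + h₁)) := by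
    rw [div_pow, div_mul_div_comm, div_eq_div_iff hT.ne' (by nlinarith)]
    linear_combination (1 + T) * hsub - (1 - T) * hadd
  have hstep' := abs_le.1 hstep
  have := one_add_div_one_sub_le (x := -T) (y := -h₂) (d := d) (by linarith) (by linarith)
    (by linarith) ((abs_nonneg _).trans hstep)
  simp only [← sub_eq_add_neg, sub_neg_eq_add] at this
  rwa [← hXT]

lemma le_mul_of_mul_one_sub_sq_eq {a a' b h : ℝ} (ha : 0 ≤ a) (hb0 : 0 ≤ b) (hb1 : b < 1)
    (hh0 : -1 < h) (hh1 : h ≤ 1) (hrec : a' * (1 - b ^ 2) = a * (1 + b ^ 2 - 2 * b * h)) :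
    a' ≤ ((1 - b) / (1 + b) + ((1 + b) / (1 - b)) ^ 2 * ((1 - h) / (1 + h))) * a := by
  have hb' : 0 < 1 - b := by linarith
  have hb'' : 0 < 1 + b := by linarith
  rw [eq_div_of_mul_eq (by nlinarith) hrec, mul_div_assoc, mul_comm]
  refine mul_le_mul_of_nonneg_right ?_ ha
  have e : (1 + b ^ 2 - 2 * b * h) / (1 - b ^ 2) =
      (1 + h) * (1 - b) / (2 * (1 + b)) + (1 - h) * (1 + b) / (2 * (1 - b)) := by
    rw [div_add_div _ _ (by positivity) (by positivity),
      div_eq_div_iff (by nlinarith) (by positivity)]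
    ring
  rw [e]
  gcongr ?_ + ?_
  · rw [div_le_div_iff₀ (by positivity) hb'']
    nlinarith [mul_nonneg (mul_nonneg (sub_nonneg.2 hh1) hb'.le) hb''.le]
  · rw [div_pow, div_mul_div_comm, div_le_div_iff₀ (by positivity)
      (mul_pos (pow_pos hb' 2) (by linarith))]
    have : (1 - b) * (1 + h) ≤ 2 * (1 + b) := by nlinarith
    have h3 : 0 ≤ (1 - h) * (1 + b) * (1 - b) := by
      have := sub_nonneg.2 hh1; positivity
    nlinarith [mul_le_mul_of_nonneg_left this h3]

section MobiusCosOrbit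

variable {a b h d : ℕ → ℝ} {κ : ℝ}

theorem tendsto_neg_one_of_mobiusCos_step_of_nonpos (hb0 : ∀ n, 0 ≤ b n) (hb1 : ∀ n, b n < 1)
    (hκ : ∀ n, (1 - b n) / (1 + b n) ≤ κ) (hκ1 : κ < 1) (hh : ∀ n, -1 ≤ h n)
    (hstep : ∀ n, |h (n + 1) - mobiusCos (b n) (h n)| ≤ d n) (hd : ∀ n, d n ≤ (1 - κ ^ 2) / 16)
    (hd0 : Tendsto d atTop (𝓝 0)) (h0 : h 0 ≤ 0) : Tendsto h atTop (𝓝 (-1)) := by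
  have step (n : ℕ) (hn : h n ≤ 0) :=
    mobiusCos_step_of_nonpos (hb0 n) (hb1 n) (hκ n) (hh n) hn (hstep n) (hd n)
  have hnonpos (n : ℕ) : h n ≤ 0 := Nat.rec h0 (fun n hn => (step n hn).1) n
  have hκ0 : 0 ≤ κ := (div_nonneg (by linarith [hb1 0]) (by linarith [hb0 0])).trans (hκ 0)
  set Y := fun n => (1 + h n) / (1 - h n)
  have hY : Tendsto Y atTop (𝓝 0) :=
    tendsto_zero_of_le_mul_add (q := κ ^ 2) (by positivity) (by nlinarith)
      (fun n => div_nonneg (by linarith [hh n]) (by linarith [hnonpos n]))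
      (.of_forall fun n => (step n (hnonpos n)).2) (by simpa using hd0.const_mul 3)
  have hYh : h = fun n => (Y n - 1) / (Y n + 1) := by
    funext n
    have : 1 - h n ≠ 0 := by linarith [hnonpos n]
    simp only [Y]
    field_simp
    ring
  have := (hY.sub_const 1).div (hY.add_const 1) (by norm_num)
  rw [zero_sub, zero_add, div_one] at this
  rw [hYh]
  exact this

theorem summable_of_mobiusCos_step_of_pos (hb0 : ∀ n, 0 ≤ b n) (hb1 : ∀ n, b n < 1)
    (hκ : ∀ n, (1 - b n) / (1 + b n) ≤ κ) (hκ1 : κ < 1) (hpos : ∀ n, 0 < h n)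
    (hh1 : ∀ n, h n ≤ 1) (hstep : ∀ n, |h (n + 1) - mobiusCos (b n) (h n)| ≤ d n)
    (hd : ∀ n, d n ≤ 1 / 4) (hd0 : Tendsto d atTop (𝓝 0)) (ha : ∀ n, 0 < a n)
    (hrec : ∀ n, a (n + 1) * (1 - b n ^ 2) = a n * (1 + b n ^ 2 - 2 * b n * h n)) :
    Summable a := by
  have hκ0 : 0 ≤ κ := (div_nonneg (by linarith [hb1 0]) (by linarith [hb0 0])).trans (hκ 0)
  set X := fun n => (1 - h n) / (1 + h n)
  have hX n : 0 ≤ X n ∧ X n ≤ 1 :=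
    ⟨div_nonneg (by linarith [hh1 n]) (by linarith [hpos n]),
      (div_le_one (by linarith [hpos n])).2 (by linarith [hpos n])⟩
  set W := fun n => ((1 + b n) / (1 - b n)) ^ 2 * X n
  have hW n : W n ≤ X (n + 1) + 3 * d n :=
    mobiusCos_step_of_pos (hb0 n) (hb1 n) (by linarith [hpos n]) (hh1 n) (hpos (n + 1)).le
      (hstep n) (hd n)
  have hXW n : X n ≤ κ ^ 2 * W n := by
    have hb' : 0 < 1 - b n := by linarith [hb1 n]
    have hb'' : 0 < 1 + b n := by linarith [hb0 n]
    have : X n = ((1 - b n) / (1 + b n)) ^ 2 * W n := by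
      simp only [W]
      field_simp
    rw [this]
    exact mul_le_mul_of_nonneg_right (pow_le_pow_left₀ (div_nonneg hb'.le hb''.le) (hκ n) 2)
      (mul_nonneg (sq_nonneg _) (hX n).1)
  have hd3 : Tendsto (fun n => 3 * d n) atTop (𝓝 0) := by simpa using hd0.const_mul 3
  have hX0 : Tendsto X atTop (𝓝 0) := by
    refine tendsto_zero_of_le_mul_succ_add (q := κ ^ 2) (by positivity) (by nlinarith) hX
      (.of_forall fun n => ?_) hd3
    have hd0 : 0 ≤ d n := (abs_nonneg _).trans (hstep n)
    have : κ ^ 2 ≤ 1 := by nlinarith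
    nlinarith [hXW n, hW n]
  have hW0 : Tendsto W atTop (𝓝 0) :=
    squeeze_zero (fun n => mul_nonneg (sq_nonneg _) (hX n).1) hW
      (by simpa using (hX0.comp (tendsto_add_atTop_nat 1)).add hd3)
  refine summable_of_ratio_norm_eventually_le (r := (1 + κ) / 2) (by linarith) ?_
  filter_upwards [hW0.eventually (ge_mem_nhds (by linarith : (0 : ℝ) < (1 - κ) / 2))] with n hn
  rw [Real.norm_of_nonneg (ha _).le, Real.norm_of_nonneg (ha _).le]
  have hratio := le_mul_of_mul_one_sub_sq_eq (ha n).le (hb0 n) (hb1 n) (by linarith [hpos n])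
    (hh1 n) (hrec n)
  change _ ≤ (_ + W n) * _ at hratio
  exact hratio.trans (mul_le_mul_of_nonneg_right (by linarith [hκ n]) (ha n).le)

theorem tendsto_neg_one_of_mobiusCos_step {ℓ : ℝ} (hℓ : 0 < ℓ) (hb : Tendsto b atTop (𝓝 ℓ))
    (hb0 : ∀ n, 0 ≤ b n) (hb1 : ∀ n, b n < 1) (hh : ∀ n, -1 ≤ h n ∧ h n ≤ 1)
    (hstep : ∀ n, |h (n + 1) - mobiusCos (b n) (h n)| ≤ d n) (hd0 : Tendsto d atTop (𝓝 0))
    (ha : ∀ n, 0 < a n)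
    (hrec : ∀ n, a (n + 1) * (1 - b n ^ 2) = a n * (1 + b n ^ 2 - 2 * b n * h n))
    (hns : ¬ Summable a) : Tendsto h atTop (𝓝 (-1)) := by
  -- `κ` lies strictly between `1` and the limit `(1 - ℓ) / (1 + ℓ)` of `(1 - b n) / (1 + b n)`
  set κ := 1 / (1 + ℓ)
  have hκ1 : κ < 1 := by rw [div_lt_one (by linarith)]; linarith
  have hκ0 : 0 ≤ κ := by positivity
  have hbκ : ∀ᶠ n in atTop, (1 - b n) / (1 + b n) ≤ κ := by
    have : Tendsto (fun n => (1 - b n) / (1 + b n)) atTop (𝓝 ((1 - ℓ) / (1 + ℓ))) :=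
      (tendsto_const_nhds.sub hb).div (tendsto_const_nhds.add hb) (by linarith)
    exact this.eventually (ge_mem_nhds (div_lt_div_of_pos_right (by linarith) (by linarith)))
  have hdκ : ∀ᶠ n in atTop, d n ≤ (1 - κ ^ 2) / 16 := hd0.eventually (ge_mem_nhds (by nlinarith))
  obtain ⟨N, hN⟩ := eventually_atTop.1 (hbκ.and hdκ)
  by_cases hesc : ∃ n₀ ≥ N, h n₀ ≤ 0
  · obtain ⟨n₀, hn₀, h0⟩ := hesc
    refine (tendsto_add_atTop_iff_nat n₀).1 <| tendsto_neg_one_of_mobiusCos_step_of_nonpos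
      (b := fun n => b (n + n₀)) (d := fun n => d (n + n₀)) (fun n => hb0 _)
      (fun n => hb1 _) (fun n => (hN _ (by omega)).1) hκ1 (fun n => (hh _).1) (fun n => ?_)
      (fun n => (hN _ (by omega)).2) ((tendsto_add_atTop_iff_nat n₀).2 hd0) (by simpa using h0)
    rw [add_right_comm]
    exact hstep _
  · push Not at hesc
    exfalso
    refine hns <| (summable_nat_add_iff N).1 <| summable_of_mobiusCos_step_of_pos
      (a := fun n => a (n + N)) (b := fun n => b (n + N))
      (h := fun n => h (n + N)) (d := fun n => d (n + N)) (fun n => hb0 _) (fun n => hb1 _)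
      (fun n => (hN _ (by omega)).1) hκ1 (fun n => hesc _ (by omega)) (fun n => (hh _).2)
      (fun n => ?_) (fun n => (hN _ (by omega)).2.trans (by nlinarith))
      ((tendsto_add_atTop_iff_nat N).2 hd0) (fun n => ha _) (fun n => ?_)
    · rw [add_right_comm]
      exact hstep _
    · rw [add_right_comm]
      exact hrec _

end MobiusCosOrbit

section MobiusOrbit

open ComplexConjugate Complex

lemma norm_sub_ofReal_sq {w : ℂ} (hw : ‖w‖ = 1) (b : ℝ) :
    ‖w - b‖ ^ 2 = 1 + b ^ 2 - 2 * b * w.re := by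
  have hw2 : w.re * w.re + w.im * w.im = 1 := by
    rw [← normSq_apply, ← Complex.sq_norm, hw, one_pow]
  rw [Complex.sq_norm, normSq_apply]
  simp only [sub_re, sub_im, ofReal_re, ofReal_im]
  linear_combination hw2

lemma re_mobius_eq_mobiusCos {w : ℂ} (hw : ‖w‖ = 1) (b : ℝ) :
    ((w - b) / (1 - b * w)).re = mobiusCos b w.re := by
  have hw2 : w.re * w.re + w.im * w.im = 1 := by
    rw [← normSq_apply, ← Complex.sq_norm, hw, one_pow]
  rw [div_re, ← add_div, mobiusCos, normSq_apply]
  simp only [sub_re, sub_im, mul_re, mul_im, ofReal_re, ofReal_im, one_re, one_im]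
  congr 1
  · linear_combination (-b) * hw2
  · linear_combination b ^ 2 * hw2

lemma conj_mul_mobius {u z : ℂ} (hu : ‖u‖ = 1) (b : ℝ) :
    conj u * ((z - b * u) / (1 - conj (b * u) * z)) =
      (conj u * z - b) / (1 - b * (conj u * z)) := by
  have hcu : conj u * u = 1 := by rw [conj_mul', hu, ofReal_one, one_pow]
  rw [map_mul, conj_ofReal, ← mul_div_assoc]
  congr 1
  · linear_combination (-(b : ℂ)) * hcu
  · ring

lemma norm_sub_mul_eq {u z : ℂ} (hu : ‖u‖ = 1) (b : ℝ) : ‖z - b * u‖ = ‖conj u * z - b‖ := by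
  have hcu : conj u * u = 1 := by rw [conj_mul', hu, ofReal_one, one_pow]
  rw [← one_mul ‖z - _‖, ← hu, ← norm_conj, ← norm_mul]
  congr 1
  linear_combination (-(b : ℂ)) * hcu

lemma norm_add_sq_of_norm_eq_one {u z : ℂ} (hu : ‖u‖ = 1) (hz : ‖z‖ = 1) :
    ‖z + u‖ ^ 2 = 2 + 2 * (conj u * z).re := by
  have := norm_sub_ofReal_sq (w := conj u * z) (by rw [norm_mul, norm_conj, hu, hz, one_mul]) (-1)
  rw [← norm_sub_mul_eq hu] at this
  simp only [ofReal_neg, ofReal_one, neg_mul, one_mul, sub_neg_eq_add] at this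
  linear_combination this

variable {z β : ℕ → ℂ} {a : ℕ → ℝ} {L : ℂ}

theorem tendsto_of_mobius_orbit (hz : ∀ n, ‖z n‖ = 1) (hβ : ∀ n, ‖β n‖ < 1)
    (hzrec : ∀ n, z (n + 1) = (z n - β n) / (1 - conj (β n) * z n)) (ha : ∀ n, 0 < a n)
    (harec : ∀ n, a (n + 1) * (1 - ‖β n‖ ^ 2) = a n * ‖z n - β n‖ ^ 2)
    (hβL : Tendsto β atTop (𝓝 L)) (hL : L ≠ 0) (hns : ¬ Summable a) :
    Tendsto z atTop (𝓝 (-(L / ‖L‖))) := by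
  set u := fun n => exp (arg (β n) * I)
  have hu n : ‖u n‖ = 1 := norm_exp_ofReal_mul_I _
  have hβu n : ‖β n‖ * u n = β n := norm_mul_exp_arg_mul_I _
  have hw n : ‖conj (u n) * z n‖ = 1 := by rw [norm_mul, norm_conj, hu, hz, one_mul]
  set h := fun n => (conj (u n) * z n).re
  have hh n : -1 ≤ h n ∧ h n ≤ 1 := abs_le.1 ((abs_re_le_norm _).trans (hw n).le)
  -- in the frame rotated by `u n`, step `n` is the Möbius map with real parameter `‖β n‖`
  have hstep n : |h (n + 1) - mobiusCos ‖β n‖ (h n)| ≤ ‖u (n + 1) - u n‖ := by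
    have hrot := conj_mul_mobius (z := z n) (hu n) ‖β n‖
    rw [hβu, ← hzrec] at hrot
    rw [← re_mobius_eq_mobiusCos (hw n), ← hrot, ← sub_re, ← sub_mul, ← map_sub]
    refine (abs_re_le_norm _).trans ?_
    rw [norm_mul, norm_conj, hz, mul_one]
  have harec' n : a (n + 1) * (1 - ‖β n‖ ^ 2) = a n * (1 + ‖β n‖ ^ 2 - 2 * ‖β n‖ * h n) := by
    have hsub := norm_sub_mul_eq (z := z n) (hu n) ‖β n‖
    rw [hβu] at hsub
    rw [harec, hsub, norm_sub_ofReal_sq (hw n)]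
  have hul : Tendsto u atTop (𝓝 (L / ‖L‖)) := by
    refine (hβL.div (continuous_ofReal.tendsto _ |>.comp hβL.norm)
      (ofReal_ne_zero.2 (norm_ne_zero_iff.2 hL))).congr' ?_
    filter_upwards [hβL.eventually_ne hL] with n hn
    exact (eq_div_of_mul_eq (ofReal_ne_zero.2 (norm_ne_zero_iff.2 hn))
      (by rw [mul_comm]; exact hβu n)).symm
  have hd : Tendsto (fun n => ‖u (n + 1) - u n‖) atTop (𝓝 0) := by
    simpa using ((hul.comp (tendsto_add_atTop_nat 1)).sub hul).norm
  have hh1 := tendsto_neg_one_of_mobiusCos_step (norm_pos_iff.2 hL) hβL.norm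
    (fun n => norm_nonneg _) hβ hh hstep hd ha harec' hns
  have hzu : Tendsto (fun n => ‖z n + u n‖ ^ 2) atTop (𝓝 0) := by
    have := (hh1.const_mul 2).const_add 2
    rw [show (2 : ℝ) + 2 * -1 = 0 by norm_num] at this
    exact this.congr fun n => (norm_add_sq_of_norm_eq_one (hu n) (hz n)).symm
  have hzu' : Tendsto (fun n => z n + u n) atTop (𝓝 0) := by
    rw [tendsto_zero_iff_norm_tendsto_zero]
    simpa [Real.sqrt_sq (norm_nonneg _)] using hzu.sqrt
  simpa using hzu'.sub hul

theorem tendsto_norm_sub_of_mobius_orbit (hz : ∀ n, ‖z n‖ = 1) (hβ : ∀ n, ‖β n‖ < 1)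
    (hzrec : ∀ n, z (n + 1) = (z n - β n) / (1 - conj (β n) * z n)) (ha : ∀ n, 0 < a n)
    (harec : ∀ n, a (n + 1) * (1 - ‖β n‖ ^ 2) = a n * ‖z n - β n‖ ^ 2)
    (hβL : Tendsto β atTop (𝓝 L)) (hns : ¬ Summable a) :
    Tendsto (fun n => ‖z n - β n‖) atTop (𝓝 (1 + ‖L‖)) := by
  rcases eq_or_ne L 0 with rfl | hL
  · rw [norm_zero, add_zero, ← tendsto_sub_nhds_zero_iff]
    refine squeeze_zero_norm (fun n => ?_) (by simpa using hβL.norm)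
    simpa [hz] using abs_norm_sub_norm_le (z n - β n) (z n)
  · have hℓ : (‖L‖ : ℂ) ≠ 0 := ofReal_ne_zero.2 (norm_ne_zero_iff.2 hL)
    have hlim : -(L / ‖L‖) - L = -(((1 + ‖L‖) / ‖L‖ : ℝ) : ℂ) * L := by
      push_cast
      field_simp
      ring
    convert ((tendsto_of_mobius_orbit hz hβ hzrec ha harec hβL hL hns).sub hβL).norm using 2
    rw [hlim, norm_mul, norm_neg, norm_real, Real.norm_of_nonneg (by positivity),
      div_mul_cancel₀ _ (norm_ne_zero_iff.2 hL)]

theorem tendsto_mul_div_of_mobius_orbit {c : ℝ} (hc : 0 ≤ c) (hz : ∀ n, ‖z n‖ = 1)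
    (hβ : ∀ n, ‖β n‖ < 1) (hzrec : ∀ n, z (n + 1) = (z n - β n) / (1 - conj (β n) * z n))
    (ha : ∀ n, 0 < a n) (harec : ∀ n, a (n + 1) * (1 - ‖β n‖ ^ 2) = a n * ‖z n - β n‖ ^ 2)
    (hβL : Tendsto β atTop (𝓝 L)) (hns : ¬ Summable a) :
    Tendsto (fun n => (z n - β n) * ((a n / (c + ∑ j ∈ range (n + 1), a j) : ℝ) : ℂ)) atTop
      (𝓝 (-2 * L)) := by
  set ℓ := ‖L‖
  have hℓ0 : 0 ≤ ℓ := norm_nonneg L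
  have hzβ := tendsto_norm_sub_of_mobius_orbit hz hβ hzrec ha harec hβL hns
  have hq : Tendsto (fun n => a n / a (n + 1)) atTop (𝓝 ((1 - ℓ) / (1 + ℓ))) := by
    have : Tendsto (fun n => (1 - ‖β n‖ ^ 2) / ‖z n - β n‖ ^ 2) atTop
        (𝓝 ((1 - ℓ ^ 2) / (1 + ℓ) ^ 2)) :=
      (tendsto_const_nhds.sub (hβL.norm.pow 2)).div (hzβ.pow 2) (by positivity)
    have hℓ : 1 + ℓ ≠ 0 := by positivity
    rw [show (1 - ℓ ^ 2) / (1 + ℓ) ^ 2 = (1 - ℓ) / (1 + ℓ) by field_simp; ring] at this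
    refine this.congr fun n => ?_
    have : ‖β n‖ < ‖z n‖ := (hz n).symm ▸ hβ n
    rw [div_eq_div_iff (pow_pos (by linarith [norm_sub_norm_le (z n) (β n)]) 2).ne' (ha _).ne']
    linarith [harec n]
  have hr := tendsto_div_add_sum_of_tendsto_ratio hc ha
    ((div_le_one (by positivity)).2 (by linarith)) hq
  rcases eq_or_ne L 0 with rfl | hL
  · rw [mul_zero, tendsto_zero_iff_norm_tendsto_zero]
    have := hzβ.mul hr.abs
    rw [show ℓ = 0 from norm_zero] at this
    norm_num at this
    simpa only [norm_mul, norm_real, Real.norm_eq_abs] using this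
  · have hℓ : (ℓ : ℂ) ≠ 0 := ofReal_ne_zero.2 (norm_ne_zero_iff.2 hL)
    have hℓ' : (1 : ℂ) + ℓ ≠ 0 := by exact_mod_cast (by positivity : (1 : ℝ) + ℓ ≠ 0)
    have hlim : (-(L / ℓ) - L) * ((1 - (1 - ℓ) / (1 + ℓ) : ℝ) : ℂ) = -2 * L := by
      push_cast
      field_simp
      ring
    rw [← hlim]
    exact ((tendsto_of_mobius_orbit hz hβ hzrec ha harec hβL hL hns).sub hβL).mul
      ((continuous_ofReal.tendsto _).comp hr)

end MobiusOrbit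

section Szego

open ComplexConjugate

variable {α : ℕ → ℂ} {ζ : ℂ} {n : ℕ}

lemma ofReal_sqrt_one_sub_sq_ne_zero {x : ℂ} (hx : ‖x‖ < 1) :
    ((√(1 - ‖x‖ ^ 2) : ℝ) : ℂ) ≠ 0 :=
  Complex.ofReal_ne_zero.2 (Real.sqrt_pos.2 (by nlinarith [norm_nonneg x])).ne'

lemma szegoPhi_succ_fst (hα : ‖α n‖ < 1) :
    ((√(1 - ‖α n‖ ^ 2) : ℝ) : ℂ) * (szegoPhi α ζ (n + 1)).1 =
      ζ * (szegoPhi α ζ n).1 - conj (α n) * (szegoPhi α ζ n).2 := by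
  rw [szegoPhi, Prod.smul_fst, smul_eq_mul,
    mul_inv_cancel_left₀ (ofReal_sqrt_one_sub_sq_ne_zero hα)]

lemma szegoPhi_succ_snd (hα : ‖α n‖ < 1) :
    ((√(1 - ‖α n‖ ^ 2) : ℝ) : ℂ) * (szegoPhi α ζ (n + 1)).2 =
      (szegoPhi α ζ n).2 - α n * ζ * (szegoPhi α ζ n).1 := by
  rw [szegoPhi, Prod.smul_snd, smul_eq_mul,
    mul_inv_cancel_left₀ (ofReal_sqrt_one_sub_sq_ne_zero hα)]

lemma szegoPhi_snd_eq (hα : ∀ n, ‖α n‖ < 1) (hζ : ‖ζ‖ = 1) (n : ℕ) :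
    (szegoPhi α ζ n).2 = ζ ^ n * conj (szegoPhi α ζ n).1 := by
  induction n with
  | zero => simp [szegoPhi]
  | succ n ih =>
    have hζ0 : ζ ≠ 0 := norm_ne_zero_iff.1 (hζ ▸ one_ne_zero)
    refine mul_left_cancel₀ (ofReal_sqrt_one_sub_sq_ne_zero (hα n)) ?_
    rw [szegoPhi_succ_snd (hα n), mul_left_comm, ← Complex.conj_ofReal, ← map_mul,
      szegoPhi_succ_fst (hα n), map_sub, map_mul, map_mul, ih, map_mul, map_pow,
      ← Complex.inv_eq_conj hζ]
    simp only [Complex.conj_conj, inv_pow]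
    field_simp
    ring

lemma norm_szegoPhi_snd (hα : ∀ n, ‖α n‖ < 1) (hζ : ‖ζ‖ = 1) (n : ℕ) :
    ‖(szegoPhi α ζ n).2‖ = ‖(szegoPhi α ζ n).1‖ := by
  rw [szegoPhi_snd_eq hα hζ, norm_mul, norm_pow, hζ, one_pow, one_mul, Complex.norm_conj]

lemma szegoPhi_fst_ne_zero (hα : ∀ n, ‖α n‖ < 1) (hζ : ‖ζ‖ = 1) (n : ℕ) :
    (szegoPhi α ζ n).1 ≠ 0 := by
  induction n with
  | zero => simp [szegoPhi]
  | succ n ih =>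
    intro h0
    have := szegoPhi_succ_fst (ζ := ζ) (hα n)
    rw [h0, mul_zero, eq_comm, sub_eq_zero] at this
    have := congrArg norm this
    rw [norm_mul, norm_mul, hζ, one_mul, Complex.norm_conj, norm_szegoPhi_snd hα hζ] at this
    nlinarith [hα n, norm_pos_iff.2 ih]

/-- `ζ ^ (n - 1) * φ*_n(ζ) / φ_n(ζ)`, written without natural-number subtraction. -/
noncomputable def szegoPhase (α : ℕ → ℂ) (ζ : ℂ) (n : ℕ) : ℂ :=
  ζ ^ n * (szegoPhi α ζ n).2 / (ζ * (szegoPhi α ζ n).1)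

lemma norm_szegoPhase (hα : ∀ n, ‖α n‖ < 1) (hζ : ‖ζ‖ = 1) (n : ℕ) : ‖szegoPhase α ζ n‖ = 1 := by
  rw [szegoPhase, norm_div, norm_mul, norm_mul, norm_pow, hζ, one_pow, one_mul, one_mul,
    norm_szegoPhi_snd hα hζ, div_self (norm_ne_zero_iff.2 (szegoPhi_fst_ne_zero hα hζ n))]

lemma szegoPhase_succ (hα : ∀ n, ‖α n‖ < 1) (hζ : ‖ζ‖ = 1) (n : ℕ) :
    szegoPhase α ζ (n + 1) = (szegoPhase α ζ n - ζ ^ n * α n) /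
      (1 - conj (ζ ^ n * α n) * szegoPhase α ζ n) := by
  have hζ0 : ζ ≠ 0 := norm_ne_zero_iff.1 (hζ ▸ one_ne_zero)
  have hρ := ofReal_sqrt_one_sub_sq_ne_zero (hα n)
  have hP := szegoPhi_fst_ne_zero hα hζ n
  have hP' : ζ * (szegoPhi α ζ n).1 - conj (α n) * (szegoPhi α ζ n).2 ≠ 0 := by
    rw [← szegoPhi_succ_fst (hα n)]
    exact mul_ne_zero hρ (szegoPhi_fst_ne_zero hα hζ (n + 1))
  rw [szegoPhase, szegoPhase,
    eq_div_of_mul_eq hρ ((mul_comm _ _).trans (szegoPhi_succ_fst (ζ := ζ) (hα n))),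
    eq_div_of_mul_eq hρ ((mul_comm _ _).trans (szegoPhi_succ_snd (ζ := ζ) (hα n))), map_mul,
    map_pow, ← Complex.inv_eq_conj hζ, inv_pow]
  field_simp
  ring

lemma szegoPhase_sub_mul (hα : ∀ n, ‖α n‖ < 1) (hζ : ‖ζ‖ = 1) (n : ℕ) :
    (szegoPhase α ζ n - ζ ^ n * α n) * (ζ * (szegoPhi α ζ n).1) =
      ζ ^ n * (((√(1 - ‖α n‖ ^ 2) : ℝ) : ℂ) * (szegoPhi α ζ (n + 1)).2) := by
  have hζ0 : ζ ≠ 0 := norm_ne_zero_iff.1 (hζ ▸ one_ne_zero)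
  have hP := szegoPhi_fst_ne_zero hα hζ n
  rw [szegoPhi_succ_snd (hα n), szegoPhase]
  field_simp

lemma norm_sq_szegoPhi_succ (hα : ∀ n, ‖α n‖ < 1) (hζ : ‖ζ‖ = 1) (n : ℕ) :
    ‖(szegoPhi α ζ (n + 1)).1‖ ^ 2 * (1 - ‖ζ ^ n * α n‖ ^ 2) =
      ‖(szegoPhi α ζ n).1‖ ^ 2 * ‖szegoPhase α ζ n - ζ ^ n * α n‖ ^ 2 := by
  have := congrArg (‖·‖ ^ 2) (szegoPhase_sub_mul hα hζ n)
  simp only [norm_mul, norm_pow, hζ, one_pow, one_mul, Complex.norm_real, Real.norm_eq_abs,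
    norm_szegoPhi_snd hα hζ] at this
  rw [norm_mul, norm_pow, hζ, one_pow, one_mul]
  rw [mul_pow, mul_pow, sq_abs, Real.sq_sqrt (by nlinarith [hα n, norm_nonneg (α n)])] at this
  linear_combination -this

lemma pow_mul_szegoDelta (hα : ∀ n, ‖α n‖ < 1) (hζ : ‖ζ‖ = 1) (γ : ℝ) (n : ℕ) :
    ζ ^ n * szegoDelta α ζ γ n = (szegoPhase α ζ n - ζ ^ n * α n) *
      ((‖(szegoPhi α ζ n).1‖ ^ 2 / ((1 - γ) * γ⁻¹ + szegoK α ζ n) : ℝ) : ℂ) := by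
  have hζ0 : ζ ≠ 0 := norm_ne_zero_iff.1 (hζ ▸ one_ne_zero)
  have hP := szegoPhi_fst_ne_zero hα hζ n
  have key : ζ ^ n * (((√(1 - ‖α n‖ ^ 2) : ℝ) : ℂ) * conj (szegoPhi α ζ (n + 1)).1 *
      (szegoPhi α ζ n).2) = (szegoPhase α ζ n - ζ ^ n * α n) *
        ((szegoPhi α ζ n).1 * conj (szegoPhi α ζ n).1) := by
    rw [← Complex.conj_ofReal, ← map_mul, szegoPhi_succ_fst (hα n), szegoPhase,
      szegoPhi_snd_eq hα hζ, map_sub, map_mul, map_mul, map_mul, map_pow,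
      ← Complex.inv_eq_conj hζ]
    simp only [Complex.conj_conj, inv_pow]
    field_simp
  rw [szegoDelta, mul_div_assoc', key, Complex.mul_conj']
  push_cast
  ring

end Szego

/-- Theorem 3: if `ζ` on the unit circle is not a pure point and `ζⁿ αₙ → L`, then
`ζⁿ Δₙ(ζ) → -2L`, and consequently `ζⁿ(αₙ + Δₙ(ζ)) → -L`. -/
theorem rotated_delta_limit
    (α : ℕ → ℂ) (hα : ∀ n, ‖α n‖ < 1)
    (ζ : ℂ) (hζ : ‖ζ‖ = 1)
    (γ : ℝ) (hγ0 : 0 < γ) (hγ1 : γ < 1)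
    (hnpp : ¬ Summable (fun j => ‖(szegoPhi α ζ j).1‖ ^ 2))
    (L : ℂ) (hlim : Tendsto (fun n => ζ ^ n * α n) atTop (nhds L)) :
    Tendsto (fun n => ζ ^ n * szegoDelta α ζ γ n) atTop (nhds (-2 * L)) ∧
    Tendsto (fun n => ζ ^ n * (α n + szegoDelta α ζ γ n)) atTop (nhds (-L)) := by
  have hβ n : ‖ζ ^ n * α n‖ < 1 := by
    rw [norm_mul, norm_pow, hζ, one_pow, one_mul]
    exact hα n
  have hΔ : Tendsto (fun n => ζ ^ n * szegoDelta α ζ γ n) atTop (𝓝 (-2 * L)) := by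
    have hc : 0 ≤ (1 - γ) * γ⁻¹ := mul_nonneg (by linarith) (inv_nonneg.2 hγ0.le)
    refine (tendsto_mul_div_of_mobius_orbit hc
      (norm_szegoPhase hα hζ) hβ (szegoPhase_succ hα hζ)
      (fun n => pow_pos (norm_pos_iff.2 (szegoPhi_fst_ne_zero hα hζ n)) 2)
      (norm_sq_szegoPhi_succ hα hζ) hlim hnpp).congr fun n => ?_
    rw [pow_mul_szegoDelta hα hζ]
    rfl
  refine ⟨hΔ, ?_⟩
  have := hlim.add hΔ
  rw [show L + -2 * L = -L by ring] at this
  simpa only [mul_add] using this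
end

section
/- Let (f_{1,n}), (f_{2,n}) be complex sequences, (δ_n) a summable sequence of nonnegative reals, and (c_n) complex numbers with c_n → c where |c| < 1, such that for all n: |f_{1,n+1} − f_{1,n}| ≤ δ_n(|f_{1,n}| + |f_{2,n}|) and |f_{2,n+1} − c_n f_{2,n}| ≤ δ_n(|f_{1,n}| + |f_{2,n}|). Then sup_n (|f_{1,n}| + |f_{2,n}|) < ∞ and f_{2,n} → 0 as n → ∞. -/
open Filter

/-! Once `‖c n‖ < ρ < 1`, the mass `S n = ‖f₁ n‖ + ‖f₂ n‖` satisfies `S (n + 1) ≤ (1 + 2 δ n) S n`,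
so it stays below `S N · exp (2 ∑ δ)`. With `S ≤ M`, the second component obeys
`‖f₂ (n + 1)‖ ≤ ρ ‖f₂ n‖ + M δ n`: a strict contraction perturbed by a vanishing term, which
forces `f₂ n → 0`. -/

theorem le_mul_exp_sum_Ico_of_succ_le_one_add_mul {a δ : ℕ → ℝ} {N : ℕ} (ha : ∀ n, 0 ≤ a n)
    (h : ∀ n ≥ N, a (n + 1) ≤ (1 + δ n) * a n) :
    ∀ n ≥ N, a n ≤ a N * Real.exp (∑ j ∈ Finset.Ico N n, δ j) := by
  intro n hn
  induction n, hn using Nat.le_induction with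
  | base => simp
  | succ n hn ih =>
    rw [Finset.sum_Ico_succ_top hn, Real.exp_add]
    calc a (n + 1) ≤ (1 + δ n) * a n := h n hn
      _ ≤ Real.exp (δ n) * (a N * Real.exp (∑ j ∈ Finset.Ico N n, δ j)) :=
        mul_le_mul (by linarith [Real.add_one_le_exp (δ n)]) ih (ha n) (Real.exp_pos _).le
      _ = _ := by ring

theorem bddAbove_range_of_succ_le_one_add_mul {a δ : ℕ → ℝ} (ha : ∀ n, 0 ≤ a n)
    (hδ0 : ∀ n, 0 ≤ δ n) (hδ : Summable δ) (h : ∀ᶠ n in atTop, a (n + 1) ≤ (1 + δ n) * a n) :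
    BddAbove (Set.range a) := by
  obtain ⟨N, hN⟩ := eventually_atTop.mp h
  refine IsBoundedUnder.bddAbove_range_of_cofinite ?_
  rw [Nat.cofinite_eq_atTop]
  refine isBoundedUnder_of_eventually_le (a := a N * Real.exp (∑' j, δ j)) ?_
  filter_upwards [eventually_ge_atTop N] with n hn
  calc a n ≤ a N * Real.exp (∑ j ∈ Finset.Ico N n, δ j) :=
        le_mul_exp_sum_Ico_of_succ_le_one_add_mul ha hN n hn
    _ ≤ a N * Real.exp (∑' j, δ j) := by
      gcongr
      · exact ha N
      · exact hδ.sum_le_tsum _ fun j _ => hδ0 j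

theorem tendsto_zero_of_succ_le_mul_add {u e : ℕ → ℝ} {ρ : ℝ} (hu : ∀ n, 0 ≤ u n) (hρ0 : 0 ≤ ρ)
    (hρ1 : ρ < 1) (he : Tendsto e atTop (nhds 0))
    (h : ∀ᶠ n in atTop, u (n + 1) ≤ ρ * u n + e n) :
    Tendsto u atTop (nhds 0) := by
  refine tendsto_order.2 ⟨fun ε hε => .of_forall fun n => hε.trans_le (hu n), fun ε hε => ?_⟩
  have hε' : 0 < ε / 2 * (1 - ρ) := mul_pos (half_pos hε) (sub_pos.2 hρ1)
  obtain ⟨N, hN⟩ := eventually_atTop.mp (h.and (he.eventually_lt_const hε'))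
  -- the fixed point of `x ↦ ρ x + ε (1 - ρ) / 2` is `ε / 2`
  have hdecay : ∀ k, u (N + k) ≤ ρ ^ k * u N + ε / 2 := by
    intro k
    induction k with
    | zero => simp only [Nat.add_zero, pow_zero, one_mul]; linarith
    | succ k ih =>
      obtain ⟨hrec, hsmall⟩ := hN (N + k) (Nat.le_add_right N k)
      calc u (N + (k + 1)) ≤ ρ * u (N + k) + e (N + k) := hrec
        _ ≤ ρ * (ρ ^ k * u N + ε / 2) + ε / 2 * (1 - ρ) := by gcongr
        _ = ρ ^ (k + 1) * u N + ε / 2 := by ring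
  have hpow : Tendsto (fun k => ρ ^ k * u N) atTop (nhds 0) := by
    simpa using (tendsto_pow_atTop_nhds_zero_of_lt_one hρ0 hρ1).mul_const (u N)
  obtain ⟨K, hK⟩ := eventually_atTop.mp (hpow.eventually_lt_const (half_pos hε))
  filter_upwards [eventually_ge_atTop (N + K)] with n hn
  obtain ⟨k, rfl⟩ := Nat.exists_eq_add_of_le (le_of_add_le_left hn)
  linarith [hdecay k, hK k (by omega)]

/-- Lemma 1, part (1): under the perturbed diagonal recursion bounds with summable errors and
contraction ratio tending to `c` with `|c| < 1`, the sequence `|f₁ₙ| + |f₂ₙ|` is bounded and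
`f₂ₙ → 0`. -/
theorem f_bounded_and_f2_tendsto_zero
    (f₁ f₂ : ℕ → ℂ) (δ : ℕ → ℝ) (hδ0 : ∀ n, 0 ≤ δ n) (hδ : Summable δ)
    (c : ℕ → ℂ) (climit : ℂ) (hc : Tendsto c atTop (nhds climit))
    (hclim : ‖climit‖ < 1)
    (h1 : ∀ n, ‖f₁ (n + 1) - f₁ n‖ ≤ δ n * (‖f₁ n‖ + ‖f₂ n‖))
    (h2 : ∀ n, ‖f₂ (n + 1) - c n * f₂ n‖ ≤
      δ n * (‖f₁ n‖ + ‖f₂ n‖)) :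
    (∃ M : ℝ, ∀ n, ‖f₁ n‖ + ‖f₂ n‖ ≤ M) ∧
    Tendsto f₂ atTop (nhds 0) := by
  obtain ⟨ρ, hclimρ, hρ1⟩ := exists_between hclim
  have hcρ : ∀ᶠ n in atTop, ‖c n‖ < ρ := hc.norm.eventually_lt_const hclimρ
  have hf₂_succ n : ‖f₂ (n + 1)‖ ≤ ‖c n‖ * ‖f₂ n‖ + δ n * (‖f₁ n‖ + ‖f₂ n‖) := by
    have := norm_le_norm_add_norm_sub' (f₂ (n + 1)) (c n * f₂ n)
    rw [norm_mul] at this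
    linarith [h2 n]
  have hS_succ : ∀ᶠ n in atTop, ‖f₁ (n + 1)‖ + ‖f₂ (n + 1)‖ ≤
      (1 + 2 * δ n) * (‖f₁ n‖ + ‖f₂ n‖) := by
    filter_upwards [hcρ] with n hn
    have := norm_le_norm_add_norm_sub' (f₁ (n + 1)) (f₁ n)
    have := mul_le_of_le_one_left (norm_nonneg (f₂ n)) (hn.le.trans hρ1.le)
    linarith [h1 n, hf₂_succ n]
  obtain ⟨M, hM⟩ := bddAbove_range_of_succ_le_one_add_mul
    (a := fun n => ‖f₁ n‖ + ‖f₂ n‖) (fun n => by positivity) (fun n => mul_nonneg zero_le_two (hδ0 n)) (hδ.mul_left 2) hS_succ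
  rw [mem_upperBounds, Set.forall_mem_range] at hM
  refine ⟨⟨M, hM⟩, tendsto_zero_iff_norm_tendsto_zero.2 ?_⟩
  refine tendsto_zero_of_succ_le_mul_add (e := fun n => δ n * M) (fun n => norm_nonneg _)
    ((norm_nonneg _).trans hclimρ.le) hρ1 (by simpa using hδ.tendsto_atTop_zero.mul_const M) ?_
  filter_upwards [hcρ] with n hn
  calc ‖f₂ (n + 1)‖ ≤ ‖c n‖ * ‖f₂ n‖ + δ n * (‖f₁ n‖ + ‖f₂ n‖) := hf₂_succ n
    _ ≤ ρ * ‖f₂ n‖ + δ n * M := by gcongr; exacts [hδ0 n, hM n]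
end

section
/- Let (f_{1,n}), (f_{2,n}) be complex sequences, (δ_n) a summable sequence of nonnegative reals, and (c_n) complex numbers with c_n → c where |c| < 1, such that for all n: |f_{1,n+1} − f_{1,n}| ≤ δ_n(|f_{1,n}| + |f_{2,n}|) and |f_{2,n+1} − c_n f_{2,n}| ≤ δ_n(|f_{1,n}| + |f_{2,n}|). Suppose further there exist a constant C > 0 and an index K such that |f_{1,n}| ≤ C|f_{2,n}| for all n ≥ K. Then for every ε > 0 there exist an integer N_ε and a constant C_ε such that |f_{2,n}| ≤ C_ε(|c| + ε)ⁿ for all n ≥ N_ε; in particular both f_{1,n} and f_{2,n} decay exponentially fast. -/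
/-!
Since `‖f₁ n‖ ≤ C ‖f₂ n‖` eventually, the second recursion closes on `f₂` alone:
`‖f₂ (n+1)‖ ≤ (‖c n‖ + (1 + C) δ n) ‖f₂ n‖`, and the factor tends to `‖climit‖` because `δ n → 0`.
So `‖f₂ n‖` eventually grows by at most `‖climit‖ + ε` per step, and `f₁` inherits the bound.
-/

open Filter

theorem norm_le_of_norm_sub_mul_le {R E : Type*} [SeminormedRing R] [SeminormedAddGroup E]
    {a a' c : R} {b : E} {d C : ℝ} (hd : 0 ≤ d) (hb : ‖b‖ ≤ C * ‖a‖)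
    (h : ‖a' - c * a‖ ≤ d * (‖b‖ + ‖a‖)) :
    ‖a'‖ ≤ (‖c‖ + (1 + C) * d) * ‖a‖ :=
  calc ‖a'‖ ≤ ‖a' - c * a‖ + ‖c * a‖ := norm_le_norm_sub_add _ _
    _ ≤ d * (C * ‖a‖ + ‖a‖) + ‖c‖ * ‖a‖ := by
      gcongr
      · exact h.trans (by gcongr)
      · exact norm_mul_le _ _
    _ = (‖c‖ + (1 + C) * d) * ‖a‖ := by ring

theorem exists_eventually_le_mul_pow_of_eventually_succ_le {u : ℕ → ℝ} {r : ℝ} (hr : 0 < r)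
    (h : ∀ᶠ n in atTop, u (n + 1) ≤ r * u n) :
    ∃ D > (0 : ℝ), ∀ᶠ n in atTop, u n ≤ D * r ^ n := by
  obtain ⟨N, hN⟩ := eventually_atTop.1 h
  refine ⟨|u N| / r ^ N + 1, by positivity, eventually_atTop.2 ⟨N, fun n hn ↦ ?_⟩⟩
  obtain ⟨k, rfl⟩ := Nat.exists_eq_add_of_le hn
  have hgeom : u (N + k) ≤ r ^ k * u N :=
    le_geom (u := fun j ↦ u (N + j)) hr.le k fun j _ ↦ hN (N + j) (Nat.le_add_right N j)
  calc u (N + k) ≤ r ^ k * |u N| := hgeom.trans (by gcongr; exact le_abs_self _)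
    _ = |u N| / r ^ N * r ^ (N + k) := by field_simp; ring
    _ ≤ (|u N| / r ^ N + 1) * r ^ (N + k) := by gcongr; linarith

theorem f_exponential_decay_of_comparable_general
    (f₁ f₂ : ℕ → ℂ) (δ : ℕ → ℝ) (hδ0 : ∀ n, 0 ≤ δ n) (hδ : Summable δ)
    (c : ℕ → ℂ) (climit : ℂ) (hc : Tendsto c atTop (nhds climit))
    (h2 : ∀ n, ‖f₂ (n + 1) - c n * f₂ n‖ ≤
      δ n * (‖f₁ n‖ + ‖f₂ n‖))
    (C : ℝ) (hC : 0 < C) (K : ℕ)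
    (hcomp : ∀ n ≥ K, ‖f₁ n‖ ≤ C * ‖f₂ n‖) :
    ∀ ε > (0 : ℝ), ∃ Nε : ℕ, ∃ Cε > (0 : ℝ), ∀ n ≥ Nε,
      ‖f₂ n‖ ≤ Cε * (‖climit‖ + ε) ^ n ∧
      ‖f₁ n‖ ≤ Cε * (‖climit‖ + ε) ^ n := by
  intro ε hε
  have hrate : ∀ᶠ n in atTop, ‖c n‖ + (1 + C) * δ n < ‖climit‖ + ε := by
    have hlim := hc.norm.add (hδ.tendsto_atTop_zero.const_mul (1 + C))
    rw [mul_zero, add_zero] at hlim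
    exact hlim.eventually (eventually_lt_nhds (by linarith))
  have hstep : ∀ᶠ n in atTop, ‖f₂ (n + 1)‖ ≤ (‖climit‖ + ε) * ‖f₂ n‖ := by
    filter_upwards [hrate, eventually_ge_atTop K] with n hn hK
    exact (norm_le_of_norm_sub_mul_le (hδ0 n) (hcomp n hK) (h2 n)).trans (by gcongr)
  obtain ⟨D, hD, hdecay⟩ :=
    exists_eventually_le_mul_pow_of_eventually_succ_le (u := (‖f₂ ·‖)) (by positivity) hstep
  obtain ⟨N, hN⟩ := (hdecay.and (eventually_ge_atTop K)).exists_forall_of_atTop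
  refine ⟨N, max C 1 * D, by positivity, fun n hn ↦ ?_⟩
  obtain ⟨hf₂, hK⟩ := hN n hn
  constructor
  · calc ‖f₂ n‖ ≤ D * (‖climit‖ + ε) ^ n := hf₂
      _ ≤ max C 1 * D * (‖climit‖ + ε) ^ n := by
        rw [mul_assoc]; exact le_mul_of_one_le_left (by positivity) (le_max_right C 1)
  · calc ‖f₁ n‖ ≤ C * (D * (‖climit‖ + ε) ^ n) := (hcomp n hK).trans (by gcongr)
      _ ≤ max C 1 * D * (‖climit‖ + ε) ^ n := by
        rw [mul_assoc]; gcongr; exact le_max_left C 1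

/-- Lemma 1, case (2a): if in addition `|f₁ₙ| ≤ C|f₂ₙ|` eventually, then both `f₂ₙ` and `f₁ₙ`
decay exponentially: for every `ε > 0`, `|f₂ₙ|, |f₁ₙ| ≤ C_ε (|c| + ε)ⁿ` for large `n`. -/
theorem f_exponential_decay_of_comparable
    (f₁ f₂ : ℕ → ℂ) (δ : ℕ → ℝ) (hδ0 : ∀ n, 0 ≤ δ n) (hδ : Summable δ)
    (c : ℕ → ℂ) (climit : ℂ) (hc : Tendsto c atTop (nhds climit))
    (hclim : ‖climit‖ < 1)
    (h1 : ∀ n, ‖f₁ (n + 1) - f₁ n‖ ≤ δ n * (‖f₁ n‖ + ‖f₂ n‖))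
    (h2 : ∀ n, ‖f₂ (n + 1) - c n * f₂ n‖ ≤
      δ n * (‖f₁ n‖ + ‖f₂ n‖))
    (C : ℝ) (hC : 0 < C) (K : ℕ)
    (hcomp : ∀ n ≥ K, ‖f₁ n‖ ≤ C * ‖f₂ n‖) :
    ∀ ε > (0 : ℝ), ∃ Nε : ℕ, ∃ Cε > (0 : ℝ), ∀ n ≥ Nε,
      ‖f₂ n‖ ≤ Cε * (‖climit‖ + ε) ^ n ∧
      ‖f₁ n‖ ≤ Cε * (‖climit‖ + ε) ^ n :=
  f_exponential_decay_of_comparable_general f₁ f₂ δ hδ0 hδ c climit hc h2 C hC K hcomp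
end

section
/- Let (f_{1,n}), (f_{2,n}) be complex sequences, (δ_n) a summable sequence of nonnegative reals, and (c_n) complex numbers with c_n → c where |c| < 1, such that for all n: |f_{1,n+1} − f_{1,n}| ≤ δ_n(|f_{1,n}| + |f_{2,n}|) and |f_{2,n+1} − c_n f_{2,n}| ≤ δ_n(|f_{1,n}| + |f_{2,n}|). Suppose further that for every constant M > 0 and every index K there exists n ≥ K with |f_{1,n}| > M|f_{2,n}|. Then f_{1,n} ≠ 0 for all sufficiently large n, the ratio f_{2,n}/f_{1,n} → 0, and the limit f_1 = lim_{n→∞} f_{1,n} exists and is nonzero. -/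
/-!
Since `|c| < 1` and `δ → 0`, eventually `‖cₙ‖ + 4δₙ ≤ 1`, and then the domination
`‖f₂ₙ‖ ≤ ‖f₁ₙ‖` propagates from one index to the next; the hypothesis provides a starting
index as late as we like. Once `f₂` is dominated, `‖f₁ₙ₊₁ - f₁ₙ‖ ≤ 2δₙ‖f₁ₙ‖`, so `f₁` is a
multiplicatively summable perturbation of a nonzero constant: `‖f₁ₙ‖` stays between
`‖f₁ₙ₀‖ (1 - ∑ 2δ)` and `‖f₁ₙ₀‖ exp (∑ 2δ)`, hence `f₁` converges to a nonzero limit.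
Finally `‖f₂ₙ₊₁‖ ≤ r ‖f₂ₙ‖ + O(δₙ)` with `r < 1` makes `‖f₂ₙ‖` summable, so `f₂ₙ / f₁ₙ → 0`.
-/

open Filter Topology Finset

section MultiplicativePerturbation

variable {E : Type*}

lemma norm_le_mul_exp_sum_range [SeminormedAddCommGroup E] {x : ℕ → E} {ε : ℕ → ℝ}
    (hx : ∀ n, ‖x (n + 1) - x n‖ ≤ ε n * ‖x n‖) (n : ℕ) :
    ‖x n‖ ≤ ‖x 0‖ * Real.exp (∑ k ∈ range n, ε k) := by
  induction n with
  | zero => simp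
  | succ n ih =>
    calc ‖x (n + 1)‖ ≤ (1 + ε n) * ‖x n‖ := by
          linarith [norm_le_insert' (x (n + 1)) (x n), hx n]
      _ ≤ Real.exp (ε n) * ‖x n‖ := by
          gcongr
          linarith [Real.add_one_le_exp (ε n)]
      _ ≤ Real.exp (ε n) * (‖x 0‖ * Real.exp (∑ k ∈ range n, ε k)) := by gcongr
      _ = ‖x 0‖ * Real.exp (∑ k ∈ range (n + 1), ε k) := by
          rw [sum_range_succ, Real.exp_add]; ring

lemma mul_one_sub_sum_range_le_norm [SeminormedAddCommGroup E] {x : ℕ → E} {ε : ℕ → ℝ}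
    (hε0 : ∀ n, 0 ≤ ε n) (hx : ∀ n, ‖x (n + 1) - x n‖ ≤ ε n * ‖x n‖) (n : ℕ) :
    ‖x 0‖ * (1 - ∑ k ∈ range n, ε k) ≤ ‖x n‖ := by
  induction n with
  | zero => simp
  | succ n ih =>
    have hstep : (1 - ε n) * ‖x n‖ ≤ ‖x (n + 1)‖ := by
      linarith [norm_sub_norm_le (x n) (x (n + 1)), norm_sub_rev (x n) (x (n + 1)), hx n]
    have hS : 0 ≤ ∑ k ∈ range n, ε k := sum_nonneg fun k _ => hε0 k
    rw [sum_range_succ]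
    -- if `ε n > 1` the left side is already negative
    rcases le_or_gt (ε n) 1 with hεn | hεn
    · nlinarith [mul_le_mul_of_nonneg_left ih (sub_nonneg.2 hεn),
        mul_nonneg (mul_nonneg (norm_nonneg (x 0)) (hε0 n)) hS]
    · nlinarith [norm_nonneg (x 0), norm_nonneg (x (n + 1))]

lemma exists_tendsto_ne_zero_of_norm_sub_le [NormedAddCommGroup E] [CompleteSpace E]
    {x : ℕ → E} {ε : ℕ → ℝ} (hε0 : ∀ n, 0 ≤ ε n) (hε : Summable ε) (hε1 : ∑' n, ε n < 1)
    (hx : ∀ n, ‖x (n + 1) - x n‖ ≤ ε n * ‖x n‖) (hx0 : x 0 ≠ 0) :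
    ∃ L ≠ 0, Tendsto x atTop (𝓝 L) := by
  have hsum_le : ∀ n, ∑ k ∈ range n, ε k ≤ ∑' k, ε k :=
    fun n => hε.sum_le_tsum _ fun k _ => hε0 k
  set C := ‖x 0‖ * Real.exp (∑' k, ε k)
  have hbdd : ∀ n, ‖x n‖ ≤ C := fun n =>
    (norm_le_mul_exp_sum_range hx n).trans <|
      mul_le_mul_of_nonneg_left (Real.exp_le_exp.2 (hsum_le n)) (norm_nonneg _)
  have hdist : Summable fun n => dist (x n) (x (n + 1)) := by
    refine (hε.mul_left C).of_nonneg_of_le (fun n => dist_nonneg) fun n => ?_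
    rw [dist_comm, dist_eq_norm, mul_comm]
    exact (hx n).trans (mul_le_mul_of_nonneg_left (hbdd n) (hε0 n))
  obtain ⟨L, hL⟩ := cauchySeq_tendsto_of_complete (cauchySeq_of_summable_dist hdist)
  have hlower : ∀ n, ‖x 0‖ * (1 - ∑' k, ε k) ≤ ‖x n‖ := fun n =>
    le_trans (by gcongr; exact hsum_le n) (mul_one_sub_sum_range_le_norm hε0 hx n)
  have hpos : 0 < ‖x 0‖ * (1 - ∑' k, ε k) := mul_pos (norm_pos_iff.2 hx0) (by linarith)
  refine ⟨L, fun hL0 => ?_, hL⟩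
  have := ge_of_tendsto hL.norm (Eventually.of_forall hlower)
  rw [hL0, norm_zero] at this
  linarith

lemma exists_tendsto_ne_zero_of_eventually_norm_sub_le [NormedAddCommGroup E] [CompleteSpace E]
    {x : ℕ → E} {ε : ℕ → ℝ} (hε0 : ∀ n, 0 ≤ ε n) (hε : Summable ε)
    (hx : ∀ᶠ n in atTop, ‖x (n + 1) - x n‖ ≤ ε n * ‖x n‖) (hfreq : ∃ᶠ n in atTop, x n ≠ 0) :
    ∃ L ≠ 0, Tendsto x atTop (𝓝 L) := by
  obtain ⟨N, hN⟩ :=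
    (hx.and ((tendsto_sum_nat_add ε).eventually_lt_const zero_lt_one)).exists_forall_of_atTop
  obtain ⟨n₀, hn₀, hx₀⟩ := frequently_atTop.1 hfreq N
  obtain ⟨L, hL0, hL⟩ := exists_tendsto_ne_zero_of_norm_sub_le (x := fun k => x (k + n₀))
    (fun k => hε0 _) ((summable_nat_add_iff n₀).2 hε) (hN n₀ hn₀).2
    (fun k => by simpa only [add_right_comm k 1 n₀] using (hN (k + n₀) (by omega)).1)
    (by simpa using hx₀)
  exact ⟨L, hL0, (tendsto_add_atTop_iff_nat n₀).1 hL⟩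

end MultiplicativePerturbation

lemma summable_of_le_mul_add {u b : ℕ → ℝ} {r : ℝ} (hu : ∀ n, 0 ≤ u n) (hr0 : 0 ≤ r)
    (hr1 : r < 1) (hb0 : ∀ n, 0 ≤ b n) (hb : Summable b)
    (hrec : ∀ n, u (n + 1) ≤ r * u n + b n) : Summable u := by
  refine summable_of_sum_range_le (c := (u 0 + ∑' n, b n) / (1 - r)) hu fun n => ?_
  rw [le_div_iff₀ (by linarith)]
  have hmono : ∑ i ∈ range n, u i ≤ ∑ i ∈ range (n + 1), u i :=
    sum_le_sum_of_subset_of_nonneg (range_subset_range.2 n.le_succ) fun i _ _ => hu i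
  have hb_le : ∑ i ∈ range n, b i ≤ ∑' i, b i := hb.sum_le_tsum _ fun i _ => hb0 i
  have hshift : ∑ i ∈ range (n + 1), u i ≤
      u 0 + (r * ∑ i ∈ range n, u i + ∑ i ∈ range n, b i) := by
    rw [sum_range_succ', add_comm, mul_sum, ← sum_add_distrib]
    gcongr with i
    exact hrec i
  have hscaled := mul_le_mul_of_nonneg_left hmono hr0
  linarith

lemma tendsto_zero_of_eventually_le_mul_add {u b : ℕ → ℝ} {r : ℝ} (hu : ∀ n, 0 ≤ u n)
    (hr0 : 0 ≤ r) (hr1 : r < 1) (hb0 : ∀ n, 0 ≤ b n) (hb : Summable b)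
    (hrec : ∀ᶠ n in atTop, u (n + 1) ≤ r * u n + b n) : Tendsto u atTop (𝓝 0) := by
  obtain ⟨N, hN⟩ := hrec.exists_forall_of_atTop
  have hsum : Summable fun k => u (k + N) :=
    summable_of_le_mul_add (fun k => hu _) hr0 hr1 (fun k => hb0 _)
      ((summable_nat_add_iff N).2 hb)
      (fun k => by simpa only [add_right_comm k 1 N] using hN (k + N) (by omega))
  exact (tendsto_add_atTop_iff_nat N).1 hsum.tendsto_atTop_zero

section Domination

variable {R : Type*} [SeminormedRing R]

lemma norm_le_norm_mul_add_of_norm_sub_mul_le {b b' c : R} {d : ℝ} (h : ‖b' - c * b‖ ≤ d) :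
    ‖b'‖ ≤ ‖c‖ * ‖b‖ + d := by
  linarith [norm_le_insert' b' (c * b), norm_mul_le c b]

lemma norm_le_norm_of_norm_sub_le {a a' b b' c : R} {δ : ℝ} (hδ : 0 ≤ δ)
    (hcδ : ‖c‖ + 4 * δ ≤ 1) (ha : ‖a' - a‖ ≤ δ * (‖a‖ + ‖b‖))
    (hb : ‖b' - c * b‖ ≤ δ * (‖a‖ + ‖b‖)) (hba : ‖b‖ ≤ ‖a‖) : ‖b'‖ ≤ ‖a'‖ := by
  have hb' := norm_le_norm_mul_add_of_norm_sub_mul_le hb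
  have ha' : ‖a‖ - δ * (‖a‖ + ‖b‖) ≤ ‖a'‖ := by
    linarith [norm_sub_norm_le a a', norm_sub_rev a a']
  nlinarith [mul_le_mul_of_nonneg_left hba (norm_nonneg c), mul_le_mul_of_nonneg_left hba hδ,
    mul_le_mul_of_nonneg_right hcδ (norm_nonneg a)]

lemma eventually_norm_le_norm_of_frequently {f₁ f₂ c : ℕ → R} {δ : ℕ → ℝ}
    (hδ0 : ∀ n, 0 ≤ δ n) (h1 : ∀ n, ‖f₁ (n + 1) - f₁ n‖ ≤ δ n * (‖f₁ n‖ + ‖f₂ n‖))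
    (h2 : ∀ n, ‖f₂ (n + 1) - c n * f₂ n‖ ≤ δ n * (‖f₁ n‖ + ‖f₂ n‖))
    (hcδ : ∀ᶠ n in atTop, ‖c n‖ + 4 * δ n ≤ 1) (hfreq : ∃ᶠ n in atTop, ‖f₂ n‖ ≤ ‖f₁ n‖) :
    ∀ᶠ n in atTop, ‖f₂ n‖ ≤ ‖f₁ n‖ := by
  obtain ⟨N, hN⟩ := hcδ.exists_forall_of_atTop
  obtain ⟨n₀, hn₀, h₀⟩ := frequently_atTop.1 hfreq N
  refine eventually_atTop.2 ⟨n₀, fun n hn => ?_⟩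
  induction n, hn using Nat.le_induction with
  | base => exact h₀
  | succ n hn ih =>
    exact norm_le_norm_of_norm_sub_le (hδ0 n) (hN n (hn₀.trans hn)) (h1 n) (h2 n) ih

end Domination

/-- Lemma 1, case (2b): if for every `M > 0` and every `K` there is `n ≥ K` with
`|f₁ₙ| > M|f₂ₙ|`, then eventually `f₁ₙ ≠ 0`, the ratio `f₂ₙ/f₁ₙ → 0`, and `f₁ₙ` converges to
a nonzero limit. -/
theorem f1_converges_of_not_comparable
    (f₁ f₂ : ℕ → ℂ) (δ : ℕ → ℝ) (hδ0 : ∀ n, 0 ≤ δ n) (hδ : Summable δ)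
    (c : ℕ → ℂ) (climit : ℂ) (hc : Tendsto c atTop (nhds climit))
    (hclim : ‖climit‖ < 1)
    (h1 : ∀ n, ‖f₁ (n + 1) - f₁ n‖ ≤ δ n * (‖f₁ n‖ + ‖f₂ n‖))
    (h2 : ∀ n, ‖f₂ (n + 1) - c n * f₂ n‖ ≤
      δ n * (‖f₁ n‖ + ‖f₂ n‖))
    (hnc : ∀ M > (0 : ℝ), ∀ K : ℕ, ∃ n ≥ K, ‖f₁ n‖ > M * ‖f₂ n‖) :
    (∀ᶠ n in atTop, f₁ n ≠ 0) ∧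
    Tendsto (fun n => f₂ n / f₁ n) atTop (nhds 0) ∧
    ∃ f : ℂ, f ≠ 0 ∧ Tendsto f₁ atTop (nhds f) := by
  obtain ⟨r, hcr, hr1⟩ := exists_between hclim
  have hcδ : ∀ᶠ n in atTop, ‖c n‖ + 4 * δ n ≤ 1 :=
    ((hc.norm.add (hδ.tendsto_atTop_zero.const_mul 4)).eventually_lt_const
      (by simpa using hclim)).mono fun _ => le_of_lt
  have hfreq : ∃ᶠ n in atTop, ‖f₂ n‖ < ‖f₁ n‖ :=
    frequently_atTop.2 fun K => by simpa only [one_mul] using hnc 1 one_pos K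
  have hdom := eventually_norm_le_norm_of_frequently hδ0 h1 h2 hcδ (hfreq.mono fun _ => le_of_lt)
  obtain ⟨L, hL0, hL⟩ := exists_tendsto_ne_zero_of_eventually_norm_sub_le (ε := fun n => 2 * δ n)
    (fun n => by linarith [hδ0 n]) (hδ.mul_left 2)
    (hdom.mono fun n hn => (h1 n).trans (by nlinarith [hδ0 n]))
    (hfreq.mono fun n hn => norm_pos_iff.1 ((norm_nonneg _).trans_lt hn))
  obtain ⟨C, hC⟩ := hL.norm.bddAbove_range
  have hC0 : 0 ≤ C := (norm_nonneg _).trans (hC ⟨0, rfl⟩)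
  have hf₂ : Tendsto (fun n => ‖f₂ n‖) atTop (𝓝 0) := by
    refine tendsto_zero_of_eventually_le_mul_add (fun n => norm_nonneg _)
      ((norm_nonneg _).trans hcr.le) hr1 (fun n => mul_nonneg (by positivity) (hδ0 n))
      (hδ.mul_left (2 * C)) ?_
    filter_upwards [hdom, hc.norm.eventually_lt_const hcr] with n hdomn hcn
    nlinarith [norm_le_norm_mul_add_of_norm_sub_mul_le (h2 n), hC ⟨n, rfl⟩, hδ0 n,
      mul_le_mul_of_nonneg_right hcn.le (norm_nonneg (f₂ n))]
  refine ⟨hL.eventually_ne hL0, ?_, L, hL0, hL⟩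
  rw [← zero_div L]
  exact (tendsto_zero_iff_norm_tendsto_zero.2 hf₂).div hL hL0
end

section
/- Let (r_n) be a sequence of complex numbers, (c_n) complex numbers with c_n → c where |c| < 1, and (e_n) a summable sequence of nonnegative reals, such that |r_{n+1} − c_n r_n| ≤ e_n for all n. Then (r_n) is of bounded variation: Σ_{n=0}^∞ |r_{n+1} − r_n| < ∞ (and in particular r_n converges, with limit 0). -/
/-!
Eventually `‖c n‖ ≤ ρ < 1`, so `aₙ = ‖rₙ‖` satisfies `aₙ₊₁ ≤ ρ aₙ + eₙ`. Summing this over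
`n < K` bounds `(1 - ρ)` times the partial sums of `a` by `a₀ + ∑ eₙ`, hence `∑ ‖rₙ‖ < ∞`,
which dominates both the variation `∑ ‖rₙ₊₁ - rₙ‖` and forces `rₙ → 0`.
-/

open Filter Finset

theorem summable_of_le_mul_add_s12 {a e : ℕ → ℝ} {ρ : ℝ} (ha : ∀ n, 0 ≤ a n) (he0 : ∀ n, 0 ≤ e n)
    (he : Summable e) (hρ : ρ < 1) (h : ∀ n, a (n + 1) ≤ ρ * a n + e n) : Summable a := by
  refine summable_of_sum_range_le ha (c := (a 0 + ∑' n, e n) / (1 - ρ)) fun K => ?_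
  have hstep : ∑ k ∈ range (K + 1), a k ≤ a 0 + ρ * ∑ k ∈ range K, a k + ∑' n, e n :=
    calc ∑ k ∈ range (K + 1), a k = a 0 + ∑ k ∈ range K, a (k + 1) := by
          rw [sum_range_succ', add_comm]
      _ ≤ a 0 + ∑ k ∈ range K, (ρ * a k + e k) := by gcongr with k; exact h k
      _ = a 0 + ρ * ∑ k ∈ range K, a k + ∑ k ∈ range K, e k := by
          rw [sum_add_distrib, mul_sum, add_assoc]
      _ ≤ a 0 + ρ * ∑ k ∈ range K, a k + ∑' n, e n := by
          gcongr; exact he.sum_le_tsum _ fun n _ => he0 n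
  have hmono : ∑ k ∈ range K, a k ≤ ∑ k ∈ range (K + 1), a k := by
    rw [sum_range_succ]; linarith [ha K]
  rw [le_div_iff₀ (by linarith)]
  linarith

theorem summable_of_eventually_le_mul_add {a e : ℕ → ℝ} {ρ : ℝ} (ha : ∀ n, 0 ≤ a n)
    (he0 : ∀ n, 0 ≤ e n) (he : Summable e) (hρ : ρ < 1)
    (h : ∀ᶠ n in atTop, a (n + 1) ≤ ρ * a n + e n) : Summable a := by
  obtain ⟨N, hN⟩ := eventually_atTop.mp h
  refine (summable_nat_add_iff N).mp <| summable_of_le_mul_add_s12 (fun _ => ha _) (fun _ => he0 _)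
    ((summable_nat_add_iff N).mpr he) hρ fun n => ?_
  simpa only [add_right_comm] using hN (n + N) (by omega)

theorem summable_norm_of_norm_sub_smul_le {𝕜 E : Type*} [NormedField 𝕜]
    [SeminormedAddCommGroup E] [NormedSpace 𝕜 E] {r : ℕ → E} {c : ℕ → 𝕜} {e : ℕ → ℝ} {ρ : ℝ}
    (hρ : ρ < 1) (hc : ∀ᶠ n in atTop, ‖c n‖ ≤ ρ) (he : Summable e)
    (h : ∀ n, ‖r (n + 1) - c n • r n‖ ≤ e n) : Summable fun n => ‖r n‖ := by
  refine summable_of_eventually_le_mul_add (fun _ => norm_nonneg _)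
    (fun n => (norm_nonneg _).trans (h n)) he hρ ?_
  filter_upwards [hc] with n hn
  calc ‖r (n + 1)‖ ≤ ‖c n • r n‖ + ‖r (n + 1) - c n • r n‖ := norm_le_insert' _ _
    _ ≤ ‖c n‖ * ‖r n‖ + e n := add_le_add (norm_smul_le _ _) (h n)
    _ ≤ ρ * ‖r n‖ + e n := by gcongr

theorem bounded_variation_of_contraction_general
    (r : ℕ → ℂ) (c : ℕ → ℂ) (climit : ℂ) (hc : Tendsto c atTop (nhds climit))
    (hclim : ‖climit‖ < 1)
    (e : ℕ → ℝ) (he : Summable e)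
    (h : ∀ n, ‖r (n + 1) - c n * r n‖ ≤ e n) :
    Summable (fun n => ‖r (n + 1) - r n‖) ∧ Tendsto r atTop (nhds 0) := by
  obtain ⟨ρ, hcρ, hρ⟩ := exists_between hclim
  have hnorm : Summable fun n => ‖r n‖ :=
    summable_norm_of_norm_sub_smul_le hρ (hc.norm.eventually (eventually_le_nhds hcρ)) he h
  refine ⟨.of_nonneg_of_le (fun _ => norm_nonneg _) (fun n => norm_sub_le _ _)
    (((summable_nat_add_iff 1).mpr hnorm).add hnorm), ?_⟩
  exact tendsto_zero_iff_norm_tendsto_zero.mpr hnorm.tendsto_atTop_zero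

/-- Contraction-plus-summable-error lemma: if `|r_{n+1} - cₙ rₙ| ≤ eₙ` with `eₙ ≥ 0` summable
and `cₙ → c`, `|c| < 1`, then `(rₙ)` is of bounded variation (and in particular converges,
with limit `0`). -/
theorem bounded_variation_of_contraction
    (r : ℕ → ℂ) (c : ℕ → ℂ) (climit : ℂ) (hc : Tendsto c atTop (nhds climit))
    (hclim : ‖climit‖ < 1)
    (e : ℕ → ℝ) (he0 : ∀ n, 0 ≤ e n) (he : Summable e)
    (h : ∀ n, ‖r (n + 1) - c n * r n‖ ≤ e n) :
    Summable (fun n => ‖r (n + 1) - r n‖) ∧ Tendsto r atTop (nhds 0) :=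
  bounded_variation_of_contraction_general r c climit hc hclim e he h
end

section
/- Let c ∈ (0,1) and let (a_n)_{n≥1} be a nondecreasing sequence of real numbers with 0 < a_n ≤ 1 and a_n → 1. Define α_{−1} = −1 and recursively α_n = c·a_{n+1}²/(1 − α_{n−1}) − 1 for n ≥ 0. Then: (i) −1 < α_n < 0 for all n ≥ 0; (ii) Σ_{n=0}^∞ |α_{n+1} − α_n| < ∞ (the sequence is of bounded variation); and (iii) α_n → −√(1−c). -/
/-!
With `α₋₁ = -1` every term is obtained from the previous one by the map
`x ↦ c t² / (1 - x) - 1`, which is increasing in `x < 1` and in `t ≥ 0` and sends `(-∞, 0]` into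
`(-1, c - 1]`. Since the recursion starts at the bottom value `-1` and `aₙ` increases, the
sequence `αₙ` increases and stays in `(-1, c - 1]`. A bounded monotone sequence converges and
has bounded variation (the variation telescopes). Its limit `L < 0` solves `L = c / (1 - L) - 1`,
that is `L² = 1 - c`.
-/

open Filter Topology

noncomputable def verblunskyStep (c t x : ℝ) : ℝ := c * t ^ 2 / (1 - x) - 1

section Step

variable {c t t' x x' L : ℝ}

theorem verblunskyStep_mem_Ioc (hc : 0 < c) (ht₀ : 0 < t) (ht₁ : t ≤ 1) (hx : x ≤ 0) :
    verblunskyStep c t x ∈ Set.Ioc (-1) (c - 1) := by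
  have hnum : 0 < c * t ^ 2 := by positivity
  have hnum_le : c * t ^ 2 ≤ c := mul_le_of_le_one_right hc.le (pow_le_one₀ ht₀.le ht₁)
  constructor <;> unfold verblunskyStep
  · linarith [div_pos hnum (by linarith : (0 : ℝ) < 1 - x)]
  · linarith [div_le_self hnum.le (by linarith : (1 : ℝ) ≤ 1 - x)]

theorem verblunskyStep_le_verblunskyStep (hc : 0 ≤ c) (ht : 0 ≤ t) (htt' : t ≤ t')
    (hx' : x' < 1) (hxx' : x ≤ x') : verblunskyStep c t x ≤ verblunskyStep c t' x' := by
  have : 0 < 1 - x' := by linarith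
  unfold verblunskyStep
  gcongr

theorem eq_neg_sqrt_of_verblunskyStep_eq (hL : L < 0) (h : verblunskyStep c 1 L = L) :
    L = -√(1 - c) := by
  have hsq : L ^ 2 = 1 - c := by
    have : 1 - L ≠ 0 := by linarith
    unfold verblunskyStep at h
    field_simp at h
    linarith
  rw [← hsq, Real.sqrt_sq_eq_abs, abs_of_neg hL, neg_neg]

end Step

theorem summable_abs_sub_of_monotone {u : ℕ → ℝ} {M : ℝ} (hu : Monotone u) (hM : ∀ n, u n ≤ M) :
    Summable fun n => |u (n + 1) - u n| := by
  have hinc : ∀ n, 0 ≤ u (n + 1) - u n := fun n => sub_nonneg.2 (hu n.le_succ)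
  simp_rw [fun n => abs_of_nonneg (hinc n)]
  refine summable_of_sum_range_le (c := M - u 0) hinc fun n => ?_
  rw [Finset.sum_range_sub]
  linarith [hM n]

section Recursion

variable {c : ℝ} {t u : ℕ → ℝ}

theorem succ_mem_Ioc_of_verblunskyStep (hc₀ : 0 < c) (hc₁ : c ≤ 1) (ht₀ : ∀ n, 0 < t n)
    (ht₁ : ∀ n, t n ≤ 1) (hu₀ : u 0 = -1) (hrec : ∀ n, u (n + 1) = verblunskyStep c (t n) (u n))
    (n : ℕ) : u (n + 1) ∈ Set.Ioc (-1) (c - 1) := by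
  induction n with
  | zero =>
    rw [hrec, hu₀]
    exact verblunskyStep_mem_Ioc hc₀ (ht₀ 0) (ht₁ 0) (by norm_num)
  | succ n ih =>
    rw [hrec]
    exact verblunskyStep_mem_Ioc hc₀ (ht₀ _) (ht₁ _) (by linarith [ih.2])

theorem le_sub_one_of_verblunskyStep (hc₀ : 0 < c) (hc₁ : c ≤ 1) (ht₀ : ∀ n, 0 < t n)
    (ht₁ : ∀ n, t n ≤ 1) (hu₀ : u 0 = -1) (hrec : ∀ n, u (n + 1) = verblunskyStep c (t n) (u n)) :
    ∀ n, u n ≤ c - 1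
  | 0 => by linarith
  | n + 1 => (succ_mem_Ioc_of_verblunskyStep hc₀ hc₁ ht₀ ht₁ hu₀ hrec n).2

theorem monotone_of_verblunskyStep (hc₀ : 0 < c) (hc₁ : c ≤ 1) (ht : Monotone t)
    (ht₀ : ∀ n, 0 < t n) (ht₁ : ∀ n, t n ≤ 1) (hu₀ : u 0 = -1)
    (hrec : ∀ n, u (n + 1) = verblunskyStep c (t n) (u n)) : Monotone u := by
  refine monotone_nat_of_le_succ fun n => ?_
  induction n with
  | zero =>
    rw [hu₀]
    exact (succ_mem_Ioc_of_verblunskyStep hc₀ hc₁ ht₀ ht₁ hu₀ hrec 0).1.le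
  | succ n ih =>
    rw [hrec n, hrec (n + 1)]
    have hlt : u (n + 1) < 1 := by
      linarith [le_sub_one_of_verblunskyStep hc₀ hc₁ ht₀ ht₁ hu₀ hrec (n + 1)]
    exact verblunskyStep_le_verblunskyStep hc₀.le (ht₀ n).le (ht n.le_succ) hlt ih

theorem tendsto_of_verblunskyStep (hc₀ : 0 < c) (hc₁ : c < 1) (ht : Monotone t)
    (ht₀ : ∀ n, 0 < t n) (ht₁ : ∀ n, t n ≤ 1) (ht_lim : Tendsto t atTop (𝓝 1)) (hu₀ : u 0 = -1)
    (hrec : ∀ n, u (n + 1) = verblunskyStep c (t n) (u n)) :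
    Tendsto u atTop (𝓝 (-√(1 - c))) := by
  have hle := le_sub_one_of_verblunskyStep hc₀ hc₁.le ht₀ ht₁ hu₀ hrec
  obtain ⟨L, hL⟩ : ∃ L, Tendsto u atTop (𝓝 L) :=
    ⟨_, tendsto_atTop_ciSup (monotone_of_verblunskyStep hc₀ hc₁.le ht ht₀ ht₁ hu₀ hrec)
      ⟨c - 1, Set.forall_mem_range.2 hle⟩⟩
  have hLc : L ≤ c - 1 := le_of_tendsto' hL hle
  have hfix : verblunskyStep c 1 L = L := by
    refine tendsto_nhds_unique ?_ ((tendsto_add_atTop_iff_nat 1).2 hL)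
    simp_rw [hrec]
    exact ((tendsto_const_nhds.mul (ht_lim.pow 2)).div (tendsto_const_nhds.sub hL)
      (by linarith)).sub_const 1
  rwa [← eq_neg_sqrt_of_verblunskyStep_eq (by linarith) hfix]

end Recursion

/-- Here `a n` is the paper's `a_{n+1}`. -/
theorem appendix_recursion_bv
    (c : ℝ) (hc : c ∈ Set.Ioo (0 : ℝ) 1)
    (a : ℕ → ℝ) (ha_mono : Monotone a) (ha_pos : ∀ n, 0 < a n) (ha_le : ∀ n, a n ≤ 1)
    (ha_lim : Tendsto a atTop (nhds 1))
    (α : ℕ → ℝ)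
    (hα0 : α 0 = c * a 0 ^ 2 / (1 - (-1 : ℝ)) - 1)
    (hαrec : ∀ n, α (n + 1) = c * a (n + 1) ^ 2 / (1 - α n) - 1) :
    (∀ n, -1 < α n ∧ α n < 0) ∧
    Summable (fun n => |α (n + 1) - α n|) ∧
    Tendsto α atTop (nhds (-Real.sqrt (1 - c))) := by
  obtain ⟨hc₀, hc₁⟩ := hc
  let u : ℕ → ℝ := fun
    | 0 => -1
    | n + 1 => α n
  have hrec : ∀ n, u (n + 1) = verblunskyStep c (a n) (u n)
    | 0 => hα0
    | n + 1 => hαrec n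
  have hmem := succ_mem_Ioc_of_verblunskyStep hc₀ hc₁.le ha_pos ha_le rfl hrec
  refine ⟨fun n => ⟨(hmem n).1, (hmem n).2.trans_lt (by linarith)⟩, ?_, ?_⟩
  · exact (summable_nat_add_iff 1).2 <| summable_abs_sub_of_monotone
      (monotone_of_verblunskyStep hc₀ hc₁.le ha_mono ha_pos ha_le rfl hrec)
      (le_sub_one_of_verblunskyStep hc₀ hc₁.le ha_pos ha_le rfl hrec)
  · exact (tendsto_add_atTop_iff_nat 1).2
      (tendsto_of_verblunskyStep hc₀ hc₁ ha_mono ha_pos ha_le ha_lim rfl hrec)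
end

section
/- Suppose α_n → L with 0 < |L| < 1, Σ_{n=0}^∞ |α_{n+1} − α_n| < ∞, ζ lies on the unit circle with |ζ − 1| < 2|L| (ζ in the open spectral gap), and Σ_{j=0}^∞ |φ_j(ζ)|² = ∞ (ζ is not a pure point). Then |φ_n(ζ)| → ∞ and |φ*_n(ζ)| → ∞ as n → ∞. -/
open Filter Finset

/-!
On the unit circle `|φ_n(ζ)| = |φ*_n(ζ)|`, and `(φ_n, φ*_n)` is an orbit of the Szegő transfer
matrices `T(α_n, ζ)`, which converge to `T(L, ζ)`. For `ζ` in the gap `|ζ - 1| < 2|L|` the limit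
is hyperbolic, `|λ₁| > 1 > |λ₂|`: an eigenvalue of modulus one would force
`|ζ + 1| ≤ 2ρ = 2√(1 - |L|²)`, i.e. `|ζ - 1| ≥ 2|L|`. Paired with the two left eigenvectors of the
limit, the orbit gives components multiplied by `λ₁`, `λ₂` up to an error that is `o(1)` times the
orbit. Hence either the expanding component eventually dominates and grows geometrically, or the
contracting one dominates forever and the orbit is square summable, i.e. `ζ` is a pure point.
-/

open ContinuousLinearMap ComplexConjugate Topology

section Dichotomy

variable {a b : ℕ → ℝ} {g h ε : ℝ} {N : ℕ}

theorem tendsto_atTop_of_dominant_growth (hb0 : ∀ n, 0 ≤ b n) (hh : 0 ≤ h) (hε : 0 ≤ ε)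
    (hg : 1 < g - 2 * ε) (hgh : h + 2 * ε ≤ g - 2 * ε)
    (ha : ∀ n ≥ N, g * a n - ε * (a n + b n) ≤ a (n + 1))
    (hb : ∀ n ≥ N, b (n + 1) ≤ h * b n + ε * (a n + b n))
    {n₀ : ℕ} (hn₀ : N ≤ n₀) (hab : b n₀ < a n₀) : Tendsto a atTop atTop := by
  have key : ∀ m, b (n₀ + m) ≤ a (n₀ + m) ∧ (g - 2 * ε) ^ m * a n₀ ≤ a (n₀ + m) := by
    intro m
    induction m with
    | zero => simpa using hab.le
    | succ m ih =>
      rw [← add_assoc]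
      have hn : n₀ + m ≥ N := by omega
      have hpos : 0 ≤ a (n₀ + m) := (hb0 _).trans ih.1
      have hε_le : 0 ≤ ε * (a (n₀ + m) - b (n₀ + m)) := mul_nonneg hε (sub_nonneg.2 ih.1)
      have hgrow : (g - 2 * ε) * a (n₀ + m) ≤ a (n₀ + m + 1) := by nlinarith [ha _ hn]
      refine ⟨?_, ?_⟩
      · nlinarith [hb _ hn, mul_nonneg hh (sub_nonneg.2 ih.1), mul_nonneg (sub_nonneg.2 hgh) hpos]
      · calc (g - 2 * ε) ^ (m + 1) * a n₀ = (g - 2 * ε) * ((g - 2 * ε) ^ m * a n₀) := by ring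
          _ ≤ (g - 2 * ε) * a (n₀ + m) := by gcongr; exact ih.2
          _ ≤ _ := hgrow
  rw [← tendsto_add_atTop_iff_nat n₀]
  refine tendsto_atTop_mono (fun m => by simpa [add_comm] using (key m).2) ?_
  exact (tendsto_pow_atTop_atTop_of_one_lt hg).atTop_mul_const ((hb0 _).trans_lt hab)

theorem summable_sq_of_eventually_dominated (ha0 : ∀ n, 0 ≤ a n) (hb0 : ∀ n, 0 ≤ b n)
    (hh : 0 ≤ h) (hε : 0 ≤ ε) (hH : h + 2 * ε < 1)
    (hb : ∀ n ≥ N, b (n + 1) ≤ h * b n + ε * (a n + b n)) (hab : ∀ n ≥ N, a n ≤ b n) :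
    Summable fun n => (a n + b n) ^ 2 := by
  have hsq : Summable fun n => (2 * b n) ^ 2 := by
    refine summable_of_ratio_norm_eventually_le (r := (h + 2 * ε) ^ 2) (by nlinarith) ?_
    filter_upwards [eventually_ge_atTop N] with n hn
    have hdecay : b (n + 1) ≤ (h + 2 * ε) * b n := by nlinarith [hb n hn, hab n hn]
    rw [Real.norm_of_nonneg (by positivity), Real.norm_of_nonneg (by positivity)]
    nlinarith [hb0 (n + 1)]
  refine hsq.of_norm_bounded_eventually_nat ?_
  filter_upwards [eventually_ge_atTop N] with n hn
  rw [Real.norm_of_nonneg (by positivity)]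
  nlinarith [hab n hn, ha0 n]

theorem tendsto_atTop_or_summable_sq {δ : ℕ → ℝ} (ha0 : ∀ n, 0 ≤ a n) (hb0 : ∀ n, 0 ≤ b n)
    (hh0 : 0 ≤ h) (hh : h < 1) (hg : 1 < g) (hδ : Tendsto δ atTop (𝓝 0))
    (ha : ∀ n, g * a n - δ n * (a n + b n) ≤ a (n + 1))
    (hb : ∀ n, b (n + 1) ≤ h * b n + δ n * (a n + b n)) :
    Tendsto a atTop atTop ∨ Summable fun n => (a n + b n) ^ 2 := by
  set ε := min ((g - 1) / 4) ((1 - h) / 4)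
  have hε : 0 < ε := lt_min (by linarith) (by linarith)
  have hεg : ε ≤ (g - 1) / 4 := min_le_left _ _
  have hεh : ε ≤ (1 - h) / 4 := min_le_right _ _
  obtain ⟨N, hN⟩ := eventually_atTop.1 (hδ.eventually_le_const hε)
  have ha' : ∀ n ≥ N, g * a n - ε * (a n + b n) ≤ a (n + 1) := fun n hn =>
    le_trans (by nlinarith [hN n hn, ha0 n, hb0 n]) (ha n)
  have hb' : ∀ n ≥ N, b (n + 1) ≤ h * b n + ε * (a n + b n) := fun n hn =>
    (hb n).trans (by nlinarith [hN n hn, ha0 n, hb0 n])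
  by_cases hgrow : ∃ n ≥ N, b n < a n
  · obtain ⟨n₀, hn₀, hab⟩ := hgrow
    exact .inl (tendsto_atTop_of_dominant_growth hb0 hh0 hε.le (by linarith) (by linarith)
      ha' hb' hn₀ hab)
  · push Not at hgrow
    exact .inr (summable_sq_of_eventually_dominated ha0 hb0 hh0 hε.le (by linarith) hb' hgrow)

end Dichotomy

section Eigenfunctional

variable {𝕜 E : Type*} [NontriviallyNormedField 𝕜] [NormedAddCommGroup E] [NormedSpace 𝕜 E]
  {T : ℕ → E →L[𝕜] E} {T₀ : E →L[𝕜] E} {x : ℕ → E}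

theorem norm_eigenfunctional_succ_sub_le {ℓ : E →L[𝕜] 𝕜} {l : 𝕜}
    (hx : ∀ n, x (n + 1) = T n (x n)) (hℓ : ℓ.comp T₀ = l • ℓ) (n : ℕ) :
    ‖ℓ (x (n + 1)) - l * ℓ (x n)‖ ≤ ‖ℓ‖ * ‖T n - T₀‖ * ‖x n‖ := by
  have : ℓ (x (n + 1)) - l * ℓ (x n) = ℓ ((T n - T₀) (x n)) := by
    rw [hx, sub_apply, map_sub, ← comp_apply ℓ T₀, hℓ]
    rfl
  rw [this, mul_assoc]
  exact (ℓ.le_opNorm _).trans (by gcongr; exact (T n - T₀).le_opNorm _)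

theorem tendsto_norm_atTop_or_summable_sq_of_eigenfunctionals {ℓ₁ ℓ₂ : E →L[𝕜] 𝕜} {l₁ l₂ : 𝕜}
    {C : ℝ} (hx : ∀ n, x (n + 1) = T n (x n)) (hT : Tendsto T atTop (𝓝 T₀))
    (h₁ : ℓ₁.comp T₀ = l₁ • ℓ₁) (h₂ : ℓ₂.comp T₀ = l₂ • ℓ₂) (hl₁ : 1 < ‖l₁‖) (hl₂ : ‖l₂‖ < 1)
    (hC : ∀ n, ‖x n‖ ≤ C * (‖ℓ₁ (x n)‖ + ‖ℓ₂ (x n)‖)) :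
    Tendsto (fun n => ‖x n‖) atTop atTop ∨ Summable fun n => ‖x n‖ ^ 2 := by
  set δ : ℕ → ℝ := fun n => (‖ℓ₁‖ + ‖ℓ₂‖) * ‖T n - T₀‖ * C
  have hδ : Tendsto δ atTop (𝓝 0) := by
    simpa [δ] using
      ((tendsto_iff_norm_sub_tendsto_zero.1 hT).const_mul (‖ℓ₁‖ + ‖ℓ₂‖)).mul_const C
  have hstep : ∀ ℓ : E →L[𝕜] 𝕜, ‖ℓ‖ ≤ ‖ℓ₁‖ + ‖ℓ₂‖ → ∀ n,
      ‖ℓ‖ * ‖T n - T₀‖ * ‖x n‖ ≤ δ n * (‖ℓ₁ (x n)‖ + ‖ℓ₂ (x n)‖) := fun ℓ hℓ n => by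
    calc ‖ℓ‖ * ‖T n - T₀‖ * ‖x n‖
        ≤ (‖ℓ₁‖ + ‖ℓ₂‖) * ‖T n - T₀‖ * (C * (‖ℓ₁ (x n)‖ + ‖ℓ₂ (x n)‖)) := by
          gcongr; exact hC n
      _ = δ n * (‖ℓ₁ (x n)‖ + ‖ℓ₂ (x n)‖) := by simp only [δ]; ring
  refine (tendsto_atTop_or_summable_sq (fun n => norm_nonneg (ℓ₁ (x n)))
    (fun n => norm_nonneg (ℓ₂ (x n))) (norm_nonneg l₂) hl₂ hl₁ hδ (fun n => ?_) (fun n => ?_)).imp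
    (fun hgrow => ?_) (fun hsum => ?_)
  · have := norm_eigenfunctional_succ_sub_le hx h₁ n
    have := hstep ℓ₁ (le_add_of_nonneg_right (norm_nonneg _)) n
    have := norm_sub_norm_le (l₁ * ℓ₁ (x n)) (ℓ₁ (x (n + 1)))
    rw [norm_mul, norm_sub_rev] at this
    linarith
  · have := norm_eigenfunctional_succ_sub_le hx h₂ n
    have := hstep ℓ₂ (le_add_of_nonneg_left (norm_nonneg _)) n
    have := norm_le_insert' (ℓ₂ (x (n + 1))) (l₂ * ℓ₂ (x n))
    rw [norm_mul] at this
    linarith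
  · refine tendsto_atTop_mono (fun n => div_le_of_le_mul₀ (by positivity) (norm_nonneg _) ?_)
      (hgrow.atTop_div_const (by positivity : 0 < ‖ℓ₁‖ + 1))
    calc ‖ℓ₁ (x n)‖ ≤ ‖ℓ₁‖ * ‖x n‖ := ℓ₁.le_opNorm _
      _ ≤ ‖x n‖ * (‖ℓ₁‖ + 1) := by nlinarith [norm_nonneg (x n)]
  · refine (hsum.mul_left (C ^ 2)).of_nonneg_of_le (fun _ => by positivity) fun n => ?_
    rw [← mul_pow]
    exact pow_le_pow_left₀ (norm_nonneg _) (hC n) 2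

end Eigenfunctional

section CharacteristicRoots

theorem exists_roots_mul_eq {ρ : ℂ} (hρ : ρ ≠ 0) (ζ : ℂ) :
    ∃ l₁ l₂ : ℂ, l₁ * l₂ = ζ ∧ ρ * l₁ ^ 2 - (ζ + 1) * l₁ + ρ * ζ = 0 ∧
      ρ * l₂ ^ 2 - (ζ + 1) * l₂ + ρ * ζ = 0 := by
  obtain ⟨s, hs⟩ := IsAlgClosed.exists_pow_nat_eq ((ζ + 1) ^ 2 - 4 * ρ ^ 2 * ζ) two_pos
  refine ⟨(ζ + 1 + s) / (2 * ρ), (ζ + 1 - s) / (2 * ρ), ?_, ?_, ?_⟩ <;> field_simp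
  · linear_combination (-1 : ℂ) * hs
  · linear_combination hs
  · linear_combination hs

variable {ρ : ℝ} {ζ : ℂ}

theorem norm_ne_one_of_root {l : ℂ} (hρ : 0 ≤ ρ) (hζ : ‖ζ‖ = 1) (hgap : 2 * ρ < ‖ζ + 1‖)
    (hl : ρ * l ^ 2 - (ζ + 1) * l + ρ * ζ = 0) : ‖l‖ ≠ 1 := by
  intro h1
  have hfactor : (ζ + 1) * l = ρ * (l ^ 2 + ζ) := by linear_combination -hl
  have hle : ‖ζ + 1‖ ≤ ρ * 2 := by
    calc ‖ζ + 1‖ = ‖(ζ + 1) * l‖ := by rw [norm_mul, h1, mul_one]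
      _ = ρ * ‖l ^ 2 + ζ‖ := by rw [hfactor, norm_mul, Complex.norm_real, Real.norm_of_nonneg hρ]
      _ ≤ ρ * 2 := by
        gcongr
        calc ‖l ^ 2 + ζ‖ ≤ ‖l‖ ^ 2 + ‖ζ‖ := (norm_add_le _ _).trans (by rw [norm_pow])
          _ = 2 := by rw [h1, hζ]; norm_num
  linarith

theorem exists_roots_one_lt_norm_norm_lt_one (hρ : 0 < ρ) (hζ : ‖ζ‖ = 1)
    (hgap : 2 * ρ < ‖ζ + 1‖) :
    ∃ l₁ l₂ : ℂ, 1 < ‖l₁‖ ∧ ‖l₂‖ < 1 ∧ ρ * l₁ ^ 2 - (ζ + 1) * l₁ + ρ * ζ = 0 ∧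
      ρ * l₂ ^ 2 - (ζ + 1) * l₂ + ρ * ζ = 0 := by
  obtain ⟨l, l', hprod, hl, hl'⟩ := exists_roots_mul_eq (Complex.ofReal_ne_zero.2 hρ.ne') ζ
  have hnorm : ‖l‖ * ‖l'‖ = 1 := by rw [← norm_mul, hprod, hζ]
  rcases (norm_ne_one_of_root hρ.le hζ hgap hl).lt_or_gt with h | h
  · exact ⟨l', l, by nlinarith [norm_nonneg l, norm_nonneg l'], h, hl', hl⟩
  · exact ⟨l, l', h, by nlinarith [norm_nonneg l'], hl, hl'⟩

end CharacteristicRoots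

section Szego

noncomputable def szegoRho (a : ℂ) : ℝ := √(1 - ‖a‖ ^ 2)

theorem szegoRho_pos {a : ℂ} (ha : ‖a‖ < 1) : 0 < szegoRho a :=
  Real.sqrt_pos.2 (by nlinarith [norm_nonneg a])

theorem szegoRho_sq {a : ℂ} (ha : ‖a‖ ≤ 1) : szegoRho a ^ 2 = 1 - ‖a‖ ^ 2 :=
  Real.sq_sqrt (by nlinarith [norm_nonneg a])

theorem two_mul_szegoRho_lt_norm_add_one {ζ L : ℂ} (hζ : ‖ζ‖ = 1) (hL : ‖L‖ < 1)
    (hgap : ‖ζ - 1‖ < 2 * ‖L‖) : 2 * szegoRho L < ‖ζ + 1‖ := by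
  have hpar := parallelogram_law_with_norm ℝ ζ 1
  rw [hζ, norm_one] at hpar
  have hsq := szegoRho_sq hL.le
  refine lt_of_pow_lt_pow_left₀ 2 (norm_nonneg _) ?_
  nlinarith [norm_nonneg (ζ - 1)]

/-- The Szegő transfer matrix `ρ(a)⁻¹ [[ζ, -conj a], [-a ζ, 1]]`. -/
noncomputable def szegoTransfer (a ζ : ℂ) : ℂ × ℂ →L[ℂ] ℂ × ℂ :=
  (szegoRho a : ℂ)⁻¹ • ((ζ • fst ℂ ℂ ℂ).prod (snd ℂ ℂ ℂ) - conj a • (snd ℂ ℂ ℂ).prod 0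
    - (a * ζ) • (0 : ℂ × ℂ →L[ℂ] ℂ).prod (fst ℂ ℂ ℂ))

theorem szegoTransfer_apply (a ζ : ℂ) (x : ℂ × ℂ) :
    szegoTransfer a ζ x = (szegoRho a : ℂ)⁻¹ • (ζ * x.1 - conj a * x.2, x.2 - a * ζ * x.1) := by
  simp [szegoTransfer]

theorem szegoPhi_succ (α : ℕ → ℂ) (ζ : ℂ) (n : ℕ) :
    szegoPhi α ζ (n + 1) = szegoTransfer (α n) ζ (szegoPhi α ζ n) := by
  rw [szegoTransfer_apply, szegoPhi, szegoRho]

theorem continuousAt_szegoTransfer (ζ : ℂ) {L : ℂ} (hL : ‖L‖ < 1) :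
    ContinuousAt (szegoTransfer · ζ) L := by
  have hρ : ContinuousAt (fun a => (szegoRho a : ℂ)⁻¹) L :=
    ((by unfold szegoRho; fun_prop : Continuous fun a => (szegoRho a : ℂ)).continuousAt).inv₀
      (Complex.ofReal_ne_zero.2 (szegoRho_pos hL).ne')
  exact hρ.smul (by fun_prop)

theorem norm_mul_sub_conj_mul_eq_of_norm_eq {ζ a x y : ℂ} (hζ : ‖ζ‖ = 1) (hxy : ‖x‖ = ‖y‖) :
    ‖ζ * x - conj a * y‖ = ‖y - a * ζ * x‖ := by
  have hζ' : ζ * conj ζ = 1 := by rw [Complex.mul_conj, Complex.normSq_eq_norm_sq, hζ]; simp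
  have hxy' : x * conj x = y * conj y := by
    rw [Complex.mul_conj, Complex.mul_conj, Complex.normSq_eq_norm_sq, Complex.normSq_eq_norm_sq,
      hxy]
  have h : ((Complex.normSq (ζ * x - conj a * y) : ℝ) : ℂ) = Complex.normSq (y - a * ζ * x) := by
    rw [← Complex.mul_conj, ← Complex.mul_conj]
    simp only [map_sub, map_mul, Complex.conj_conj]
    linear_combination (x * conj x - a * conj a * x * conj x) * hζ' + (1 - a * conj a) * hxy'
  rw [Complex.norm_def, Complex.norm_def, Complex.ofReal_injective h]

theorem norm_szegoPhi_fst_eq_snd (α : ℕ → ℂ) {ζ : ℂ} (hζ : ‖ζ‖ = 1) (n : ℕ) :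
    ‖(szegoPhi α ζ n).1‖ = ‖(szegoPhi α ζ n).2‖ := by
  induction n with
  | zero => simp [szegoPhi]
  | succ n ih =>
    simp only [szegoPhi_succ, szegoTransfer_apply, Prod.smul_fst, Prod.smul_snd, smul_eq_mul,
      norm_mul, norm_mul_sub_conj_mul_eq_of_norm_eq hζ ih]

noncomputable def szegoEigenfunctional (L l : ℂ) : ℂ × ℂ →L[ℂ] ℂ :=
  ((szegoRho L : ℂ) * l - 1) • fst ℂ ℂ ℂ - conj L • snd ℂ ℂ ℂ

theorem szegoEigenfunctional_apply (L l : ℂ) (x : ℂ × ℂ) :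
    szegoEigenfunctional L l x = ((szegoRho L : ℂ) * l - 1) * x.1 - conj L * x.2 := by
  simp [szegoEigenfunctional]

theorem szegoEigenfunctional_comp_szegoTransfer {L ζ l : ℂ} (hL : ‖L‖ < 1)
    (hl : szegoRho L * l ^ 2 - (ζ + 1) * l + szegoRho L * ζ = 0) :
    (szegoEigenfunctional L l).comp (szegoTransfer L ζ) = l • szegoEigenfunctional L l := by
  have hρ : (szegoRho L : ℂ) ≠ 0 := Complex.ofReal_ne_zero.2 (szegoRho_pos hL).ne'
  have hρsq : (szegoRho L : ℂ) ^ 2 = 1 - L * conj L := by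
    rw [Complex.mul_conj, Complex.normSq_eq_norm_sq]
    exact_mod_cast szegoRho_sq hL.le
  refine ContinuousLinearMap.ext fun x => ?_
  simp only [comp_apply, szegoTransfer_apply, szegoEigenfunctional_apply, smul_apply,
    Prod.smul_mk, smul_eq_mul]
  field_simp
  linear_combination (-(szegoRho L : ℂ) * x.1) * hl + ζ * x.1 * hρsq

theorem norm_fst_le_szegoEigenfunctional {L l₁ l₂ : ℂ} (hL : ‖L‖ < 1) (hl : l₁ ≠ l₂)
    (x : ℂ × ℂ) :
    ‖x.1‖ ≤ (szegoRho L * ‖l₁ - l₂‖)⁻¹ *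
      (‖szegoEigenfunctional L l₁ x‖ + ‖szegoEigenfunctional L l₂ x‖) := by
  have hρ := szegoRho_pos hL
  rw [le_inv_mul_iff₀ (mul_pos hρ (norm_pos_iff.2 (sub_ne_zero.2 hl)))]
  calc szegoRho L * ‖l₁ - l₂‖ * ‖x.1‖
      = ‖(szegoRho L : ℂ) * (l₁ - l₂) * x.1‖ := by
        rw [norm_mul, norm_mul, Complex.norm_real, Real.norm_of_nonneg hρ.le]
    _ = ‖szegoEigenfunctional L l₁ x - szegoEigenfunctional L l₂ x‖ := by
        rw [szegoEigenfunctional_apply, szegoEigenfunctional_apply]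
        ring_nf
    _ ≤ _ := norm_sub_le _ _

end Szego

theorem phi_tendsto_atTop_of_not_pure_point_general
    (α : ℕ → ℂ)
    (L : ℂ) (hL1 : ‖L‖ < 1)
    (hlim : Tendsto α atTop (nhds L))
    (ζ : ℂ) (hζ : ‖ζ‖ = 1) (hgap : ‖ζ - 1‖ < 2 * ‖L‖)
    (hnpp : ¬ Summable (fun j => ‖(szegoPhi α ζ j).1‖ ^ 2)) :
    Tendsto (fun n => ‖(szegoPhi α ζ n).1‖) atTop atTop ∧
    Tendsto (fun n => ‖(szegoPhi α ζ n).2‖) atTop atTop := by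
  obtain ⟨l₁, l₂, hl₁, hl₂, hr₁, hr₂⟩ := exists_roots_one_lt_norm_norm_lt_one
    (szegoRho_pos hL1) hζ (two_mul_szegoRho_lt_norm_add_one hζ hL1 hgap)
  have hl : l₁ ≠ l₂ := by rintro rfl; linarith
  have hnorm : ∀ n, ‖szegoPhi α ζ n‖ = ‖(szegoPhi α ζ n).1‖ := fun n => by
    rw [Prod.norm_def, ← norm_szegoPhi_fst_eq_snd α hζ, max_self]
  rcases tendsto_norm_atTop_or_summable_sq_of_eigenfunctionals (szegoPhi_succ α ζ)
      ((continuousAt_szegoTransfer ζ hL1).tendsto.comp hlim)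
      (szegoEigenfunctional_comp_szegoTransfer hL1 hr₁)
      (szegoEigenfunctional_comp_szegoTransfer hL1 hr₂) hl₁ hl₂
      (fun n => (hnorm n).trans_le (norm_fst_le_szegoEigenfunctional hL1 hl _)) with hgrow | hsum
  · have hφ : Tendsto (fun n => ‖(szegoPhi α ζ n).1‖) atTop atTop := by
      simpa only [hnorm] using hgrow
    exact ⟨hφ, by simpa only [norm_szegoPhi_fst_eq_snd α hζ] using hφ⟩
  · exact absurd (by simpa only [hnorm] using hsum) hnpp

/-- In the second case of the proof of Theorem 1: if `ζ` in the open spectral gap is not a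
pure point, then both `|φ_n(ζ)|` and `|φ*_n(ζ)|` tend to infinity. -/
theorem phi_tendsto_atTop_of_not_pure_point
    (α : ℕ → ℂ) (hα : ∀ n, ‖α n‖ < 1)
    (L : ℂ) (hL0 : 0 < ‖L‖) (hL1 : ‖L‖ < 1)
    (hlim : Tendsto α atTop (nhds L))
    (hbv : Summable (fun n => ‖α (n + 1) - α n‖))
    (ζ : ℂ) (hζ : ‖ζ‖ = 1) (hgap : ‖ζ - 1‖ < 2 * ‖L‖)
    (hnpp : ¬ Summable (fun j => ‖(szegoPhi α ζ j).1‖ ^ 2)) :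
    Tendsto (fun n => ‖(szegoPhi α ζ n).1‖) atTop atTop ∧
    Tendsto (fun n => ‖(szegoPhi α ζ n).2‖) atTop atTop :=
  phi_tendsto_atTop_of_not_pure_point_general α L hL1 hlim ζ hζ hgap hnpp
end
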